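/- arXiv:2603.07257 — 5 statements merged into one kernel-verified Lean document; each statement's English description precedes it below -/
import Mathlib

section
/- With the notation above, for any n ∈ ℕ, any digits α_1,...,α_{n-1} ∈ {0,1,2}, and any α_n ∈ {1,2}, the value of the series F for the sequence (α_1,...,α_{n-1}, α_n, 0, 0, 0, ...) equals the value of F for the sequence (α_1,...,α_{n-1}, α_n − 1, 2, 2, 2, ...). That is, the defining series yields the same value for the two representations of any Q*_3-rational point. -/
open Finset

/-- g_{ik}: factors determined by the sequence (ε_k); indices 0-based. -/
noncomputable def gq (ε : ℕ → ℝ) (i : Fin 3) (k : ℕ) : ℝ :=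
  if i = 1 then (1 - 2 * ε k) / 3 else (1 + ε k) / 3

/-- δ_{ik}: δ_{0k}=0, δ_{1k}=g_{0k}, δ_{2k}=g_{0k}+g_{1k}. -/
noncomputable def dq (ε : ℕ → ℝ) (i : Fin 3) (k : ℕ) : ℝ :=
  if i = 0 then 0 else if i = 1 then gq ε 0 k else gq ε 0 k + gq ε 1 k

/-- F((α_k)) = δ_{α_1 1} + Σ_{k≥2} δ_{α_k k} Π_{j=1}^{k-1} g_{α_j j} (0-based indexing). -/
noncomputable def F (ε : ℕ → ℝ) (α : ℕ → Fin 3) : ℝ :=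
  ∑' k : ℕ, dq ε (α k) k * ∏ j ∈ Finset.range k, gq ε (α j) j

/-! A tail of digits `2` behaves like `0.222…` in base three: the terms `δ₂ = 1 - g₂` make the
tail telescope, `∑ₖ (1 - cₖ) ∏_{i<k} cᵢ = 1 - lim ∏ cᵢ = 1`, so the tail after position `n`
contributes exactly the prefix product `∏_{j≤n} g_{β_j j}`. Lowering the digit at `n` by one
lowers `δ` by exactly `g` of the lower digit, which is what the tail gives back. -/

open Filter Topology

lemma tendsto_prod_range_nhds_zero {c : ℕ → ℝ} {r : ℝ} (hc0 : ∀ k, 0 ≤ c k)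
    (hcr : ∀ k, c k ≤ r) (hr : r < 1) :
    Tendsto (fun m => ∏ i ∈ range m, c i) atTop (𝓝 0) := by
  have hr0 : 0 ≤ r := (hc0 0).trans (hcr 0)
  refine squeeze_zero (fun m => prod_nonneg fun i _ => hc0 i) (fun m => ?_)
    (tendsto_pow_atTop_nhds_zero_of_lt_one hr0 hr)
  calc ∏ i ∈ range m, c i ≤ ∏ _i ∈ range m, r := prod_le_prod (fun i _ => hc0 i) fun i _ => hcr i
    _ = r ^ m := by rw [prod_const, card_range]

lemma hasSum_one_sub_mul_prod_range {c : ℕ → ℝ} (hc0 : ∀ k, 0 ≤ c k) (hc1 : ∀ k, c k ≤ 1)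
    (hlim : Tendsto (fun m => ∏ i ∈ range m, c i) atTop (𝓝 0)) :
    HasSum (fun k => (1 - c k) * ∏ i ∈ range k, c i) 1 := by
  have hterm : ∀ k, (1 - c k) * ∏ i ∈ range k, c i
      = ∏ i ∈ range k, c i - ∏ i ∈ range (k + 1), c i := by
    intro k
    rw [prod_range_succ]
    ring
  rw [hasSum_iff_tendsto_nat_of_nonneg
    (fun k => mul_nonneg (sub_nonneg.2 (hc1 k)) (prod_nonneg fun i _ => hc0 i))]
  simp only [hterm, sum_range_sub', range_zero, prod_empty]
  simpa using hlim.const_sub 1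

section Digits

variable (ε : ℕ → ℝ)

lemma gq_two (k : ℕ) : gq ε 2 k = (1 + ε k) / 3 := if_neg (by decide)

lemma dq_zero (k : ℕ) : dq ε 0 k = 0 := rfl

lemma dq_two (k : ℕ) : dq ε 2 k = 1 - gq ε 2 k := by
  simp only [dq, gq, if_neg (show (2 : Fin 3) ≠ 0 by decide),
    if_neg (show (2 : Fin 3) ≠ 1 by decide)]
  norm_num
  ring

lemma dq_eq_dq_add_gq {a b : Fin 3} (ha : a ≠ 0) (hb : (b : ℕ) = a - 1) (k : ℕ) :
    dq ε a k = dq ε b k + gq ε b k := by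
  fin_cases a <;> fin_cases b <;> simp_all [dq, gq]

lemma gq_two_mem_Icc {k : ℕ} (hk : 0 ≤ ε k ∧ ε k ≤ 1) : gq ε 2 k ∈ Set.Icc (1 / 3) (2 / 3) := by
  rw [gq_two, Set.mem_Icc]
  constructor <;> linarith [hk.1, hk.2]

end Digits

noncomputable def Fterm (ε : ℕ → ℝ) (α : ℕ → Fin 3) (k : ℕ) : ℝ :=
  dq ε (α k) k * ∏ j ∈ range k, gq ε (α j) j

lemma F_eq_tsum_Fterm (ε : ℕ → ℝ) (α : ℕ → Fin 3) : F ε α = ∑' k, Fterm ε α k := rfl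

section Tails

variable {ε : ℕ → ℝ} {α β : ℕ → Fin 3} {m : ℕ}

lemma prod_range_gq_congr (h : ∀ k < m, β k = α k) :
    ∏ j ∈ range m, gq ε (β j) j = ∏ j ∈ range m, gq ε (α j) j :=
  prod_congr rfl fun j hj => by rw [h j (mem_range.1 hj)]

lemma Fterm_congr (h : ∀ k < m, β k = α k) {k : ℕ} (hk : k < m) :
    Fterm ε β k = Fterm ε α k := by
  rw [Fterm, Fterm, h k hk, prod_range_gq_congr fun j hj => h j (hj.trans hk)]

lemma F_eq_sum_of_forall_ge_eq_zero (h : ∀ k ≥ m, α k = 0) :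
    F ε α = ∑ k ∈ range m, Fterm ε α k :=
  (F_eq_tsum_Fterm ε α).trans <| tsum_eq_sum fun k hk => by
    rw [Fterm, h k (by simpa using hk), dq_zero, zero_mul]

lemma hasSum_Fterm_add_of_forall_ge_eq_two (hε : ∀ k ≥ m, 0 ≤ ε k ∧ ε k ≤ 1)
    (h : ∀ k ≥ m, β k = 2) :
    HasSum (fun k => Fterm ε β (k + m)) (∏ j ∈ range m, gq ε (β j) j) := by
  set c : ℕ → ℝ := fun k => gq ε 2 (k + m)
  have hc : ∀ k, c k ∈ Set.Icc (1 / 3) (2 / 3) := fun k =>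
    gq_two_mem_Icc ε (hε _ (Nat.le_add_left m k))
  have hc0 : ∀ k, 0 ≤ c k := fun k => le_trans (by norm_num) (hc k).1
  have hterm : ∀ k, Fterm ε β (k + m)
      = (∏ j ∈ range m, gq ε (β j) j) * ((1 - c k) * ∏ i ∈ range k, c i) := by
    intro k
    have htail : ∏ j ∈ range k, gq ε (β (m + j)) (m + j) = ∏ i ∈ range k, c i :=
      prod_congr rfl fun i _ => by rw [h _ (Nat.le_add_right m i), add_comm]
    rw [Fterm, h _ (Nat.le_add_left m k), dq_two, add_comm k m, prod_range_add, htail, add_comm]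
    ring
  simp only [hterm]
  simpa using (hasSum_one_sub_mul_prod_range hc0 (fun k => (hc k).2.trans (by norm_num))
    (tendsto_prod_range_nhds_zero hc0 (fun k => (hc k).2) (by norm_num))).mul_left _

lemma F_eq_sum_add_prod_of_forall_ge_eq_two (hε : ∀ k ≥ m, 0 ≤ ε k ∧ ε k ≤ 1)
    (h : ∀ k ≥ m, β k = 2) :
    F ε β = ∑ k ∈ range m, Fterm ε β k + ∏ j ∈ range m, gq ε (β j) j := by
  rw [F_eq_tsum_Fterm]
  refine ((hasSum_nat_add_iff' m).1 ?_).tsum_eq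
  rw [add_sub_cancel_left]
  exact hasSum_Fterm_add_of_forall_ge_eq_two hε h

end Tails

theorem stmt2 (ε : ℕ → ℝ) (hε : ∀ k, 0 ≤ ε k ∧ ε k ≤ 1) (n : ℕ) (α β : ℕ → Fin 3)
    (hpre : ∀ k < n, β k = α k) (hn : α n ≠ 0) (hβn : (β n : ℕ) = (α n : ℕ) - 1)
    (hαtail : ∀ k > n, α k = 0) (hβtail : ∀ k > n, β k = 2) :
    F ε α = F ε β := by
  rw [F_eq_sum_of_forall_ge_eq_zero (m := n + 1) hαtail,
    F_eq_sum_add_prod_of_forall_ge_eq_two (fun k _ => hε k) hβtail, sum_range_succ,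
    sum_range_succ, sum_congr rfl fun k hk => Fterm_congr hpre (mem_range.1 hk), prod_range_succ,
    Fterm, Fterm, prod_range_gq_congr hpre, dq_eq_dq_add_gq ε hn hβn]
  ring
end

section
/- Let f be the function on [0,1] defined by f(x) = F(digits of x), where the digits come from the Q*_3-representation of x determined by a positive stochastic matrix (q_{ik}). Then f is continuous at every point of [0,1]. -/
open Finset

/-- β_{ik}: β_{0k}=0, β_{1k}=q_{0k}, β_{2k}=q_{0k}+q_{1k}. -/
noncomputable def bq (q : Fin 3 → ℕ → ℝ) (i : Fin 3) (k : ℕ) : ℝ :=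
  if i = 0 then 0 else if i = 1 then q 0 k else q 0 k + q 1 k

/-- The number with Q*_3-digits (α_k): x = β_{α_1 1} + Σ_{k≥2} β_{α_k k} Π_{j=1}^{k-1} q_{α_j j}. -/
noncomputable def Xval (q : Fin 3 → ℕ → ℝ) (α : ℕ → Fin 3) : ℝ :=
  ∑' k : ℕ, bq q (α k) k * ∏ j ∈ Finset.range k, q (α j) j

/- ## auxiliary definitions -/

noncomputable def XL (q : Fin 3 → ℕ → ℝ) (a : ℕ → Fin 3) (m : ℕ) : ℝ :=
  ∑ k ∈ Finset.range m, bq q (a k) k * ∏ j ∈ Finset.range k, q (a j) j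

noncomputable def Pq (q : Fin 3 → ℕ → ℝ) (a : ℕ → Fin 3) (m : ℕ) : ℝ :=
  ∏ j ∈ Finset.range m, q (a j) j

noncomputable def XR (q : Fin 3 → ℕ → ℝ) (a : ℕ → Fin 3) (m : ℕ) : ℝ :=
  XL q a m + Pq q a m

noncomputable def Phiq (ε : ℕ → ℝ) (a : ℕ → Fin 3) (m : ℕ) : ℝ :=
  ∑ k ∈ Finset.range m, dq ε (a k) k * ∏ j ∈ Finset.range k, gq ε (a j) j

noncomputable def Gq (ε : ℕ → ℝ) (a : ℕ → Fin 3) (m : ℕ) : ℝ :=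
  ∏ j ∈ Finset.range m, gq ε (a j) j

section basic

variable {q : Fin 3 → ℕ → ℝ} {ε : ℕ → ℝ}

lemma bq_nonneg (hq : ∀ i k, 0 < q i k) (i : Fin 3) (k : ℕ) : 0 ≤ bq q i k := by
  have h0 := hq 0 k; have h1 := hq 1 k
  fin_cases i <;> simp [bq] <;> linarith

lemma bq_pos_of_ne (hq : ∀ i k, 0 < q i k) {i : Fin 3} (hi : i ≠ 0) (k : ℕ) :
    0 < bq q i k := by
  fin_cases i
  · simp at hi
  · simpa [bq] using hq 0 k
  · simpa [bq] using add_pos (hq 0 k) (hq 1 k)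

lemma bq_add_q_of_ne (hq : ∀ i k, 0 < q i k) {i : Fin 3} (hi : i ≠ 2) (k : ℕ) :
    bq q i k + q i k = bq q (i + 1) k := by
  fin_cases i <;> simp_all [bq] <;> ring

lemma bq_add_q_le (hq : ∀ i k, 0 < q i k) (hsum : ∀ k, q 0 k + q 1 k + q 2 k = 1)
    (i : Fin 3) (k : ℕ) : bq q i k + q i k ≤ 1 := by
  have h := hsum k
  have h0 := hq 0 k; have h1 := hq 1 k; have h2 := hq 2 k
  fin_cases i <;> simp [bq] <;> linarith

lemma bq_add_q_le' (hq : ∀ i k, 0 < q i k) (hsum : ∀ k, q 0 k + q 1 k + q 2 k = 1)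
    {i : Fin 3} (hi : i ≠ 2) (k : ℕ) : bq q i k + q i k ≤ 1 - q 2 k := by
  have h := hsum k
  have h0 := hq 0 k; have h1 := hq 1 k; have h2 := hq 2 k
  fin_cases i <;> [skip; skip; exact absurd rfl hi] <;> simp [bq] <;> linarith

lemma bq_two_add_q (hsum : ∀ k, q 0 k + q 1 k + q 2 k = 1) (k : ℕ) :
    bq q 2 k + q 2 k = 1 := by
  have h := hsum k
  simp [bq]; linarith

lemma bq_step (hq : ∀ i k, 0 < q i k) {i j : Fin 3} (hij : i < j) (k : ℕ) :
    bq q i k + q i k ≤ bq q j k := by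
  have h0 := hq 0 k; have h1 := hq 1 k
  fin_cases i <;> fin_cases j <;> simp_all [bq, Fin.lt_def] <;> linarith [hq 0 k, hq 1 k]

lemma dq_add_gq_of_ne {i : Fin 3} (hi : i ≠ 2) (k : ℕ) :
    dq ε i k + gq ε i k = dq ε (i + 1) k := by
  fin_cases i <;> simp_all [dq, gq]

lemma dq_two_add_gq (k : ℕ) : dq ε 2 k + gq ε 2 k = 1 := by
  simp [dq, gq]; ring

lemma gq_abs_le (hε : ∀ k, 0 ≤ ε k ∧ ε k ≤ 1) (i : Fin 3) (k : ℕ) :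
    |gq ε i k| ≤ 2/3 := by
  have h := hε k
  fin_cases i <;> simp [gq, abs_le] <;>
    first
      | (constructor <;> linarith [h.1, h.2])
      | linarith [h.1, h.2]

lemma dq_abs_le (hε : ∀ k, 0 ≤ ε k ∧ ε k ≤ 1) (i : Fin 3) (k : ℕ) :
    |dq ε i k| ≤ 2/3 := by
  have h := hε k
  fin_cases i <;> simp [dq, gq, abs_le] <;>
    first
      | (constructor <;> linarith [h.1, h.2])
      | linarith [h.1, h.2]

end basic

section sums

variable {q : Fin 3 → ℕ → ℝ} {ε : ℕ → ℝ} {a b : ℕ → Fin 3}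

lemma Pq_pos (hq : ∀ i k, 0 < q i k) (a : ℕ → Fin 3) (m : ℕ) : 0 < Pq q a m :=
  Finset.prod_pos fun j _ => hq (a j) j

lemma XL_succ (m : ℕ) : XL q a (m + 1) = XL q a m + bq q (a m) m * Pq q a m :=
  Finset.sum_range_succ _ m

lemma Pq_succ (m : ℕ) : Pq q a (m + 1) = Pq q a m * q (a m) m :=
  Finset.prod_range_succ _ m

lemma Phiq_succ (m : ℕ) : Phiq ε a (m + 1) = Phiq ε a m + dq ε (a m) m * Gq ε a m :=
  Finset.sum_range_succ _ m

lemma Gq_succ (m : ℕ) : Gq ε a (m + 1) = Gq ε a m * gq ε (a m) m :=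
  Finset.prod_range_succ _ m

lemma XL_mono (hq : ∀ i k, 0 < q i k) {m n : ℕ} (h : m ≤ n) : XL q a m ≤ XL q a n := by
  induction n, h using Nat.le_induction with
  | base => exact le_refl _
  | succ n hn ih =>
      rw [XL_succ]
      have := mul_nonneg (bq_nonneg hq (a n) n) (Pq_pos hq a n).le
      linarith

lemma XR_succ (hq : ∀ i k, 0 < q i k) (m : ℕ) :
    XR q a (m + 1) = XL q a m + (bq q (a m) m + q (a m) m) * Pq q a m := by
  rw [XR, XL_succ, Pq_succ]; ring

lemma XR_anti (hq : ∀ i k, 0 < q i k) (hsum : ∀ k, q 0 k + q 1 k + q 2 k = 1)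
    {m n : ℕ} (h : m ≤ n) : XR q a n ≤ XR q a m := by
  induction n, h using Nat.le_induction with
  | base => exact le_refl _
  | succ n hn ih =>
      refine le_trans ?_ ih
      rw [XR_succ hq, XR]
      have hP := Pq_pos hq a n
      nlinarith [bq_add_q_le hq hsum (a n) n]

lemma XL_lt_XR (hq : ∀ i k, 0 < q i k) (m : ℕ) : XL q a m < XR q a m := by
  have := Pq_pos hq a m; rw [XR]; linarith

/-- XL is invariant along digit-0 steps. -/
lemma XL_eq_of_zero (hq : ∀ i k, 0 < q i k) {m n : ℕ} (h : m ≤ n)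
    (hz : ∀ j, m ≤ j → j < n → a j = 0) : XL q a n = XL q a m := by
  induction n, h using Nat.le_induction with
  | base => rfl
  | succ n hn ih =>
      rw [XL_succ, hz n hn (Nat.lt_succ_self n)]
      simp [bq]
      exact ih fun j h1 h2 => hz j h1 (Nat.lt_succ_of_lt h2)

/-- XR is invariant along digit-2 steps. -/
lemma XR_eq_of_two (hq : ∀ i k, 0 < q i k) (hsum : ∀ k, q 0 k + q 1 k + q 2 k = 1)
    {m n : ℕ} (h : m ≤ n) (hz : ∀ j, m ≤ j → j < n → a j = 2) : XR q a n = XR q a m := by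
  induction n, h using Nat.le_induction with
  | base => rfl
  | succ n hn ih =>
      rw [XR_succ hq, hz n hn (Nat.lt_succ_self n), bq_two_add_q hsum, one_mul, ← XR]
      exact ih fun j h1 h2 => hz j h1 (Nat.lt_succ_of_lt h2)

/-- Phi is invariant along digit-0 steps. -/
lemma Phiq_eq_of_zero {m n : ℕ} (h : m ≤ n)
    (hz : ∀ j, m ≤ j → j < n → a j = 0) : Phiq ε a n = Phiq ε a m := by
  induction n, h using Nat.le_induction with
  | base => rfl
  | succ n hn ih =>
      rw [Phiq_succ, hz n hn (Nat.lt_succ_self n)]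
      simp [dq]
      exact ih fun j h1 h2 => hz j h1 (Nat.lt_succ_of_lt h2)

/-- Phi + G is invariant along digit-2 steps. -/
lemma PhiGq_eq_of_two {m n : ℕ} (h : m ≤ n)
    (hz : ∀ j, m ≤ j → j < n → a j = 2) :
    Phiq ε a n + Gq ε a n = Phiq ε a m + Gq ε a m := by
  induction n, h using Nat.le_induction with
  | base => rfl
  | succ n hn ih =>
      rw [Phiq_succ, Gq_succ, hz n hn (Nat.lt_succ_self n)]
      have : Phiq ε a n + dq ε 2 n * Gq ε a n + Gq ε a n * gq ε 2 n
          = Phiq ε a n + (dq ε 2 n + gq ε 2 n) * Gq ε a n := by ring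
      rw [this, dq_two_add_gq, one_mul]
      exact ih fun j h1 h2 => hz j h1 (Nat.lt_succ_of_lt h2)

/-- prefix congruence -/
lemma XL_congr {m : ℕ} (h : ∀ j < m, a j = b j) : XL q a m = XL q b m := by
  unfold XL
  refine Finset.sum_congr rfl fun k hk => ?_
  rw [Finset.mem_range] at hk
  rw [h k hk]
  congr 1
  refine Finset.prod_congr rfl fun j hj => ?_
  rw [Finset.mem_range] at hj
  rw [h j (hj.trans hk)]

lemma Pq_congr {m : ℕ} (h : ∀ j < m, a j = b j) : Pq q a m = Pq q b m := by
  unfold Pq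
  refine Finset.prod_congr rfl fun j hj => ?_
  rw [Finset.mem_range] at hj
  rw [h j hj]

lemma Phiq_congr {m : ℕ} (h : ∀ j < m, a j = b j) : Phiq ε a m = Phiq ε b m := by
  unfold Phiq
  refine Finset.sum_congr rfl fun k hk => ?_
  rw [Finset.mem_range] at hk
  rw [h k hk]
  congr 1
  refine Finset.prod_congr rfl fun j hj => ?_
  rw [Finset.mem_range] at hj
  rw [h j (hj.trans hk)]

lemma Gq_abs_le (hε : ∀ k, 0 ≤ ε k ∧ ε k ≤ 1) (a : ℕ → Fin 3) (m : ℕ) :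
    |Gq ε a m| ≤ (2/3 : ℝ) ^ m := by
  induction m with
  | zero => simp [Gq]
  | succ n ih =>
      rw [Gq_succ, abs_mul, pow_succ]
      exact mul_le_mul ih (gq_abs_le hε (a n) n) (abs_nonneg _) (by positivity)

end sums

section series

variable {q : Fin 3 → ℕ → ℝ} {ε : ℕ → ℝ} {a : ℕ → Fin 3}

lemma Xterm_nonneg (hq : ∀ i k, 0 < q i k) (k : ℕ) :
    0 ≤ bq q (a k) k * ∏ j ∈ Finset.range k, q (a j) j :=
  mul_nonneg (bq_nonneg hq (a k) k) (Pq_pos hq a k).le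

lemma X_partial_le (hq : ∀ i k, 0 < q i k) (hsum : ∀ k, q 0 k + q 1 k + q 2 k = 1)
    (m N : ℕ) : XL q a N ≤ XR q a m := by
  rcases le_total N m with h | h
  · exact le_trans (XL_mono hq h) (XL_lt_XR hq m).le
  · exact le_trans (XL_lt_XR hq N).le (XR_anti hq hsum h)

lemma X_summable (hq : ∀ i k, 0 < q i k) (hsum : ∀ k, q 0 k + q 1 k + q 2 k = 1) :
    Summable (fun k => bq q (a k) k * ∏ j ∈ Finset.range k, q (a j) j) := by
  refine summable_of_sum_range_le (c := XR q a 0) (fun k => Xterm_nonneg hq k) fun n => ?_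
  exact X_partial_le hq hsum 0 n

lemma XL_le_Xval (hq : ∀ i k, 0 < q i k) (hsum : ∀ k, q 0 k + q 1 k + q 2 k = 1)
    (m : ℕ) : XL q a m ≤ Xval q a :=
  Summable.sum_le_tsum (Finset.range m) (fun k _ => Xterm_nonneg hq k) (X_summable hq hsum)

lemma Xval_le_XR (hq : ∀ i k, 0 < q i k) (hsum : ∀ k, q 0 k + q 1 k + q 2 k = 1)
    (m : ℕ) : Xval q a ≤ XR q a m :=
  Summable.tsum_le_of_sum_range_le (X_summable hq hsum) (fun n => X_partial_le hq hsum m n)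

lemma Fterm_abs_le (hε : ∀ k, 0 ≤ ε k ∧ ε k ≤ 1) (k : ℕ) :
    |dq ε (a k) k * ∏ j ∈ Finset.range k, gq ε (a j) j| ≤ 2/3 * (2/3 : ℝ) ^ k := by
  rw [abs_mul]
  exact mul_le_mul (dq_abs_le hε (a k) k) (Gq_abs_le hε a k) (abs_nonneg _) (by norm_num)

lemma F_summable (hε : ∀ k, 0 ≤ ε k ∧ ε k ≤ 1) :
    Summable (fun k => dq ε (a k) k * ∏ j ∈ Finset.range k, gq ε (a j) j) := by
  refine Summable.of_abs ?_
  refine Summable.of_nonneg_of_le (fun k => abs_nonneg _) (fun k => Fterm_abs_le hε k) ?_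
  exact (summable_geometric_of_lt_one (by norm_num) (by norm_num)).mul_left _

lemma F_sub_Phiq_abs_le (hε : ∀ k, 0 ≤ ε k ∧ ε k ≤ 1) (m : ℕ) :
    |F ε a - Phiq ε a m| ≤ 2 * (2/3 : ℝ) ^ m := by
  set f : ℕ → ℝ := fun k => dq ε (a k) k * ∏ j ∈ Finset.range k, gq ε (a j) j with hf
  have hs : Summable f := F_summable hε
  have hs' : Summable fun k => f (k + m) := hs.comp_injective (add_left_injective m)
  have h1 : ∑ i ∈ Finset.range m, f i + ∑' i, f (i + m) = ∑' i, f i :=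
    Summable.sum_add_tsum_nat_add m hs
  have h2 : F ε a - Phiq ε a m = ∑' k, f (k + m) := by
    rw [F, Phiq, ← h1]; ring
  have hg : Summable fun k => 2/3 * (2/3 : ℝ) ^ (k + m) :=
    ((summable_geometric_of_lt_one (by norm_num) (by norm_num)).comp_injective
      (add_left_injective m)).mul_left _
  have h3 : |∑' k, f (k + m)| ≤ ∑' k, |f (k + m)| := by
    simpa [Real.norm_eq_abs] using norm_tsum_le_tsum_norm (f := fun k => f (k + m))
      (by simpa [Real.norm_eq_abs] using hs'.abs)
  have h4 : ∑' k, |f (k + m)| ≤ ∑' k : ℕ, 2/3 * (2/3 : ℝ) ^ (k + m) :=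
    Summable.tsum_le_tsum (fun k => Fterm_abs_le hε (k + m)) hs'.abs hg
  have h5 : ∑' k : ℕ, 2/3 * (2/3 : ℝ) ^ (k + m) = 2 * (2/3 : ℝ) ^ m := by
    have he : ∀ k : ℕ, 2/3 * (2/3 : ℝ) ^ (k + m) = (2/3 * (2/3:ℝ)^m) * (2/3)^k := by
      intro k; rw [pow_add]; ring
    rw [tsum_congr he, tsum_mul_left, tsum_geometric_of_lt_one (by norm_num) (by norm_num)]
    norm_num
    ring
  rw [h2]
  linarith

end series

section forcing

variable {q : Fin 3 → ℕ → ℝ} {ε : ℕ → ℝ} {a b : ℕ → Fin 3}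

lemma forcing_right (hq : ∀ i k, 0 < q i k) (hsum : ∀ k, q 0 k + q 1 k + q 2 k = 1)
    {m : ℕ} (hx : Xval q a = XR q a m) : ∀ K, m ≤ K → a K = 2 := by
  intro K hK
  by_contra hne
  have h1 : Xval q a ≤ XR q a (K + 1) := Xval_le_XR hq hsum (K + 1)
  have h2 : XR q a (K + 1) < XR q a K := by
    rw [XR_succ hq, XR]
    have hP := Pq_pos hq a K
    have hb := bq_add_q_le' hq hsum hne K
    nlinarith [hq 2 K]
  have h3 : XR q a K ≤ XR q a m := XR_anti hq hsum hK
  linarith [hx ▸ h1]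

lemma forcing_left (hq : ∀ i k, 0 < q i k) (hsum : ∀ k, q 0 k + q 1 k + q 2 k = 1)
    {m : ℕ} (hx : Xval q a = XL q a m) : ∀ K, m ≤ K → a K = 0 := by
  intro K hK
  by_contra hne
  have h1 : XL q a (K + 1) ≤ Xval q a := XL_le_Xval hq hsum (K + 1)
  have h2 : XL q a K < XL q a (K + 1) := by
    rw [XL_succ]
    have hP := Pq_pos hq a K
    nlinarith [bq_pos_of_ne hq hne K]
  have h3 : XL q a m ≤ XL q a K := XL_mono hq hK
  linarith [hx ▸ h1]

/-- If `y` lies strictly inside the rank-`M` cylinder of `d`, then any digit sequence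
representing `y` agrees with `d` on the first `M` digits. -/
lemma digit_agree (hq : ∀ i k, 0 < q i k) (hsum : ∀ k, q 0 k + q 1 k + q 2 k = 1)
    {d β : ℕ → Fin 3} {M : ℕ} {y : ℝ}
    (hy : Xval q β = y) (h1 : XL q d M < y) (h2 : y < XR q d M) :
    ∀ t < M, β t = d t := by
  intro t
  induction t using Nat.strong_induction_on with
  | _ t IH =>
    intro htM
    have hpre : ∀ j < t, β j = d j := fun j hj => IH j hj (hj.trans htM)
    have hXLe : XL q β t = XL q d t := XL_congr hpre
    have hPe : Pq q β t = Pq q d t := Pq_congr hpre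
    have hyl : XL q d t + bq q (β t) t * Pq q d t ≤ y := by
      have := XL_le_Xval (a := β) hq hsum (t + 1)
      rw [XL_succ, hXLe, hPe] at this
      linarith [hy ▸ this]
    have hyr : y ≤ XL q d t + (bq q (β t) t + q (β t) t) * Pq q d t := by
      have := Xval_le_XR (a := β) hq hsum (t + 1)
      rw [XR_succ hq, hXLe, hPe] at this
      linarith [hy ▸ this]
    have hdl : XL q d t + bq q (d t) t * Pq q d t < y :=
      lt_of_le_of_lt (by rw [← XL_succ]; exact XL_mono hq htM) h1
    have hdr : y < XL q d t + (bq q (d t) t + q (d t) t) * Pq q d t := by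
      refine lt_of_lt_of_le h2 ?_
      rw [← XR_succ hq]
      exact XR_anti hq hsum htM
    by_contra hne
    have hP := Pq_pos hq d t
    rcases lt_or_gt_of_ne hne with hlt | hgt
    · have := bq_step hq hlt t
      nlinarith
    · have := bq_step hq hgt t
      nlinarith

end forcing

section extra

variable {q : Fin 3 → ℕ → ℝ} {ε : ℕ → ℝ} {a b : ℕ → Fin 3}

lemma Gq_congr {m : ℕ} (h : ∀ j < m, a j = b j) : Gq ε a m = Gq ε b m := by
  unfold Gq
  refine Finset.prod_congr rfl fun j hj => ?_
  rw [Finset.mem_range] at hj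
  rw [h j hj]

lemma bq_pred (hq : ∀ i k, 0 < q i k) {i : Fin 3} (hi : i ≠ 0) (k : ℕ) :
    bq q (i - 1) k + q (i - 1) k = bq q i k := by
  fin_cases i <;> simp_all [bq]

lemma dq_pred {i : Fin 3} (hi : i ≠ 0) (k : ℕ) :
    dq ε (i - 1) k + gq ε (i - 1) k = dq ε i k := by
  fin_cases i <;> simp_all [dq]

end extra

section onesided

variable {q : Fin 3 → ℕ → ℝ} {ε : ℕ → ℝ}

/-- abstract glue step: if the digits of `y` agree with `d` up to `m` and `Phiq d m`
is close to `F a`, then `F (α y)` is close to `F a`. -/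
lemma glue (hε : ∀ k, 0 ≤ ε k ∧ ε k ≤ 1) {βy d a : ℕ → Fin 3} {m : ℕ} {C : ℝ}
    (hagree : ∀ t < m, βy t = d t)
    (hclose : |Phiq ε d m - F ε a| ≤ C) :
    |F ε βy - F ε a| ≤ 2 * (2/3 : ℝ) ^ m + C := by
  have e1 := F_sub_Phiq_abs_le (a := βy) hε m
  have e3 : Phiq ε βy m = Phiq ε d m := Phiq_congr hagree
  have h := abs_add_le (F ε βy - Phiq ε βy m) (Phiq ε βy m - F ε a)
  rw [e3] at h
  have heq' : F ε βy - Phiq ε d m + (Phiq ε d m - F ε a) = F ε βy - F ε a := by ring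
  rw [heq'] at h
  rw [e3] at e1
  linarith

lemma right_side (hq : ∀ i k, 0 < q i k) (hsum : ∀ k, q 0 k + q 1 k + q 2 k = 1)
    (hε : ∀ k, 0 ≤ ε k ∧ ε k ≤ 1)
    (α : ℝ → ℕ → Fin 3) (hα : ∀ x ∈ Set.Icc (0 : ℝ) 1, Xval q (α x) = x)
    (x : ℝ) (hx : x ∈ Set.Icc (0 : ℝ) 1) (m : ℕ) :
    ∃ δ > 0, ∀ y ∈ Set.Icc (0 : ℝ) 1, x < y → y < x + δ →
      |F ε (α y) - F ε (α x)| ≤ 8 * (2/3 : ℝ) ^ m := by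
  classical
  set a := α x with ha
  have hxa : Xval q a = x := hα x hx
  have hpow : (0:ℝ) < (2/3 : ℝ) ^ m := by positivity
  have hxle : x ≤ XR q a m := hxa ▸ Xval_le_XR hq hsum m
  rcases lt_or_eq_of_le hxle with hlt | heq
  · -- x is strictly inside its rank-m cylinder on the right
    refine ⟨XR q a m - x, by linarith, ?_⟩
    intro y hy hxy hyd
    have hya : Xval q (α y) = y := hα y hy
    have hyL : XL q a m < y :=
      lt_of_le_of_lt (le_of_le_of_eq (XL_le_Xval hq hsum m) hxa) hxy
    have hagree : ∀ t < m, α y t = a t :=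
      digit_agree hq hsum hya hyL (by linarith)
    have e2 := F_sub_Phiq_abs_le (a := a) hε m
    have := glue hε hagree (C := 2 * (2/3:ℝ)^m) (by rw [abs_sub_comm]; exact e2)
    linarith
  · -- x is the right endpoint of its rank-m cylinder
    have h2all : ∀ K, m ≤ K → a K = 2 := forcing_right hq hsum (heq ▸ hxa)
    have hex : ∃ k, ∀ K, k ≤ K → a K = 2 := ⟨m, h2all⟩
    set m' := Nat.find hex with hm'def
    have hm' : ∀ K, m' ≤ K → a K = 2 := Nat.find_spec hex
    have hm'le : m' ≤ m := Nat.find_min' hex h2all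
    rcases Nat.eq_zero_or_eq_succ_pred m' with h0 | hsucc
    · -- all digits are 2 : x = 1, nothing to the right
      have hx1 : x = 1 := by
        have : XR q a m = XR q a 0 :=
          XR_eq_of_two hq hsum (Nat.zero_le m) (fun j _ hj => hm' j (h0 ▸ Nat.zero_le j))
        have h00 : XR q a 0 = 1 := by simp [XR, XL, Pq]
        rw [heq, this, h00]
      exact ⟨1, one_pos, fun y hy hxy _ => absurd (hxy.trans_le hy.2) (by rw [hx1]; exact lt_irrefl 1)⟩
    · set n := m' - 1 with hn
      have hm'n : m' = n + 1 := hsucc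
      have hnm : n + 1 ≤ m := hm'n ▸ hm'le
      have hi : a n ≠ 2 := by
        have hmin := Nat.find_min hex (m := n) (by omega)
        push_neg at hmin
        obtain ⟨K, hK1, hK2⟩ := hmin
        have : K = n := by
          by_contra hKn
          exact hK2 (hm' K (by omega))
        rwa [this] at hK2
      set d : ℕ → Fin 3 := fun k => if k < n then a k else if k = n then a n + 1 else 0 with hd
      have hd_pre : ∀ j < n, d j = a j := by intro j hj; simp [hd, hj]
      have hdn : d n = a n + 1 := by simp [hd]
      have hdz : ∀ j, n + 1 ≤ j → d j = 0 := by
        intro j hj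
        have h1 : ¬ j < n := by omega
        have h2 : j ≠ n := by omega
        simp [hd, h1, h2]
      -- left endpoint of the d-cylinder equals x
      have hXLd : XL q d m = x := by
        have h1 : XL q d m = XL q d (n + 1) :=
          XL_eq_of_zero hq hnm (fun j hj1 _ => hdz j hj1)
        have h2 : XL q d (n + 1) = XL q a n + bq q (a n + 1) n * Pq q a n := by
          rw [XL_succ, XL_congr hd_pre, Pq_congr hd_pre, hdn]
        have h3 : XL q a n + bq q (a n + 1) n * Pq q a n = XR q a (n + 1) := by
          rw [← bq_add_q_of_ne hq hi, XR, XL_succ, Pq_succ]; ring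
        have h4 : XR q a (n + 1) = XR q a m :=
          (XR_eq_of_two hq hsum hnm (fun j hj1 _ => hm' j (hm'n ▸ hj1))).symm
        rw [h1, h2, h3, h4, ← heq]
      have hPd := Pq_pos hq d m
      refine ⟨Pq q d m, hPd, ?_⟩
      intro y hy hxy hyd
      have hya : Xval q (α y) = y := hα y hy
      have hagree : ∀ t < m, α y t = d t := by
        refine digit_agree hq hsum hya ?_ ?_
        · rw [hXLd]; exact hxy
        · rw [XR, hXLd]; linarith
      -- Phi value of the d-cylinder
      have hPhid : Phiq ε d m = Phiq ε a m + Gq ε a m := by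
        have h1 : Phiq ε d m = Phiq ε d (n + 1) :=
          Phiq_eq_of_zero hnm (fun j hj1 _ => hdz j hj1)
        have h2 : Phiq ε d (n + 1) = Phiq ε a n + dq ε (a n + 1) n * Gq ε a n := by
          rw [Phiq_succ, Phiq_congr hd_pre, Gq_congr hd_pre, hdn]
        have h3 : Phiq ε a n + dq ε (a n + 1) n * Gq ε a n
            = Phiq ε a (n + 1) + Gq ε a (n + 1) := by
          rw [← dq_add_gq_of_ne hi, Phiq_succ, Gq_succ]; ring
        have h4 : Phiq ε a (n + 1) + Gq ε a (n + 1) = Phiq ε a m + Gq ε a m :=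
          (PhiGq_eq_of_two hnm (fun j hj1 _ => hm' j (hm'n ▸ hj1))).symm
        rw [h1, h2, h3, h4]
      have e2 := F_sub_Phiq_abs_le (a := a) hε m
      have eG := Gq_abs_le hε a m
      have hclose : |Phiq ε d m - F ε a| ≤ 3 * (2/3:ℝ)^m := by
        rw [hPhid]
        have h := abs_add_le (Phiq ε a m - F ε a) (Gq ε a m)
        have heq2 : Phiq ε a m - F ε a + Gq ε a m = Phiq ε a m + Gq ε a m - F ε a := by ring
        rw [heq2] at h
        rw [abs_sub_comm] at e2
        linarith
      have := glue hε hagree hclose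
      linarith

end onesided

section leftside

variable {q : Fin 3 → ℕ → ℝ} {ε : ℕ → ℝ}

lemma left_side (hq : ∀ i k, 0 < q i k) (hsum : ∀ k, q 0 k + q 1 k + q 2 k = 1)
    (hε : ∀ k, 0 ≤ ε k ∧ ε k ≤ 1)
    (α : ℝ → ℕ → Fin 3) (hα : ∀ x ∈ Set.Icc (0 : ℝ) 1, Xval q (α x) = x)
    (x : ℝ) (hx : x ∈ Set.Icc (0 : ℝ) 1) (m : ℕ) :
    ∃ δ > 0, ∀ y ∈ Set.Icc (0 : ℝ) 1, y < x → x - δ < y →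
      |F ε (α y) - F ε (α x)| ≤ 8 * (2/3 : ℝ) ^ m := by
  classical
  set a := α x with ha
  have hxa : Xval q a = x := hα x hx
  have hpow : (0:ℝ) < (2/3 : ℝ) ^ m := by positivity
  have hxge : XL q a m ≤ x := hxa ▸ XL_le_Xval hq hsum m
  rcases lt_or_eq_of_le hxge with hlt | heq
  · -- x is strictly inside its rank-m cylinder on the left
    refine ⟨x - XL q a m, by linarith, ?_⟩
    intro y hy hxy hyd
    have hya : Xval q (α y) = y := hα y hy
    have hyR : y < XR q a m :=
      lt_of_lt_of_le hxy (le_of_eq_of_le hxa.symm (Xval_le_XR hq hsum m))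
    have hagree : ∀ t < m, α y t = a t :=
      digit_agree hq hsum hya (by linarith) hyR
    have e2 := F_sub_Phiq_abs_le (a := a) hε m
    have := glue hε hagree (C := 2 * (2/3:ℝ)^m) (by rw [abs_sub_comm]; exact e2)
    linarith
  · -- x is the left endpoint of its rank-m cylinder
    have h0all : ∀ K, m ≤ K → a K = 0 := forcing_left hq hsum (by rw [hxa, heq])
    have hex : ∃ k, ∀ K, k ≤ K → a K = 0 := ⟨m, h0all⟩
    set m' := Nat.find hex with hm'def
    have hm' : ∀ K, m' ≤ K → a K = 0 := Nat.find_spec hex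
    have hm'le : m' ≤ m := Nat.find_min' hex h0all
    rcases Nat.eq_zero_or_eq_succ_pred m' with h0 | hsucc
    · -- all digits are 0 : x = 0, nothing to the left
      have hx0 : x = 0 := by
        have h1 : XL q a m = XL q a 0 :=
          XL_eq_of_zero hq (Nat.zero_le m) (fun j _ hj => hm' j (h0 ▸ Nat.zero_le j))
        have h00 : XL q a 0 = 0 := by simp [XL]
        rw [← heq, h1, h00]
      refine ⟨1, one_pos, fun y hy hxy _ => absurd (lt_of_le_of_lt hy.1 hxy) ?_⟩
      rw [hx0]; exact lt_irrefl 0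
    · set n := m' - 1 with hn
      have hm'n : m' = n + 1 := hsucc
      have hnm : n + 1 ≤ m := hm'n ▸ hm'le
      have hi : a n ≠ 0 := by
        have hmin := Nat.find_min hex (m := n) (by omega)
        push_neg at hmin
        obtain ⟨K, hK1, hK2⟩ := hmin
        have : K = n := by
          by_contra hKn
          exact hK2 (hm' K (by omega))
        rwa [this] at hK2
      set e : ℕ → Fin 3 := fun k => if k < n then a k else if k = n then a n - 1 else 2 with he
      have he_pre : ∀ j < n, e j = a j := by intro j hj; simp [he, hj]
      have hen : e n = a n - 1 := by simp [he]
      have hez : ∀ j, n + 1 ≤ j → e j = 2 := by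
        intro j hj
        have h1 : ¬ j < n := by omega
        have h2 : j ≠ n := by omega
        simp [he, h1, h2]
      -- right endpoint of the e-cylinder equals x
      have hXRe : XR q e m = x := by
        have h1 : XR q e m = XR q e (n + 1) :=
          XR_eq_of_two hq hsum hnm (fun j hj1 _ => hez j hj1)
        have h2 : XR q e (n + 1) = XL q a n + (bq q (a n - 1) n + q (a n - 1) n) * Pq q a n := by
          rw [XR_succ hq, XL_congr he_pre, Pq_congr he_pre, hen]
        have h3 : XL q a n + (bq q (a n - 1) n + q (a n - 1) n) * Pq q a n = XL q a (n + 1) := by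
          rw [bq_pred hq hi, XL_succ]
        have h4 : XL q a (n + 1) = XL q a m :=
          (XL_eq_of_zero hq hnm (fun j hj1 _ => hm' j (hm'n ▸ hj1))).symm
        rw [h1, h2, h3, h4, heq]
      have hPe := Pq_pos hq e m
      refine ⟨Pq q e m, hPe, ?_⟩
      intro y hy hxy hyd
      have hya : Xval q (α y) = y := hα y hy
      have hagree : ∀ t < m, α y t = e t := by
        refine digit_agree hq hsum hya ?_ ?_
        · have : XL q e m = XR q e m - Pq q e m := by rw [XR]; ring
          rw [this, hXRe]; linarith
        · rw [hXRe]; exact hxy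
      -- Phi value of the e-cylinder
      have hPhie : Phiq ε e m = Phiq ε a m - Gq ε e m := by
        have h1 : Phiq ε e m + Gq ε e m = Phiq ε e (n + 1) + Gq ε e (n + 1) :=
          PhiGq_eq_of_two hnm (fun j hj1 _ => hez j hj1)
        have h2 : Phiq ε e (n + 1) + Gq ε e (n + 1)
            = Phiq ε a n + (dq ε (a n - 1) n + gq ε (a n - 1) n) * Gq ε a n := by
          rw [Phiq_succ, Gq_succ, Phiq_congr he_pre, Gq_congr he_pre, hen]; ring
        have h3 : Phiq ε a n + (dq ε (a n - 1) n + gq ε (a n - 1) n) * Gq ε a n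
            = Phiq ε a (n + 1) := by
          rw [dq_pred hi, Phiq_succ]
        have h4 : Phiq ε a (n + 1) = Phiq ε a m :=
          (Phiq_eq_of_zero hnm (fun j hj1 _ => hm' j (hm'n ▸ hj1))).symm
        have := h1.trans (h2.trans (h3.trans h4))
        linarith
      have e2 := F_sub_Phiq_abs_le (a := a) hε m
      have eG := Gq_abs_le hε e m
      have hclose : |Phiq ε e m - F ε a| ≤ 3 * (2/3:ℝ)^m := by
        rw [hPhie]
        have h := abs_add_le (Phiq ε a m - F ε a) (-Gq ε e m)
        have heq2 : Phiq ε a m - F ε a + -Gq ε e m = Phiq ε a m - Gq ε e m - F ε a := by ring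
        rw [heq2, abs_neg] at h
        rw [abs_sub_comm] at e2
        linarith
      have := glue hε hagree hclose
      linarith

end leftside

theorem stmt7 (q : Fin 3 → ℕ → ℝ) (hq : ∀ i k, 0 < q i k)
    (hsum : ∀ k, q 0 k + q 1 k + q 2 k = 1)
    (ε : ℕ → ℝ) (hε : ∀ k, 0 ≤ ε k ∧ ε k ≤ 1)
    (α : ℝ → ℕ → Fin 3) (hα : ∀ x ∈ Set.Icc (0 : ℝ) 1, Xval q (α x) = x) :
    ContinuousOn (fun x => F ε (α x)) (Set.Icc (0 : ℝ) 1) := by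
  intro x hx
  rw [Metric.continuousWithinAt_iff]
  intro η hη
  obtain ⟨m, hm⟩ : ∃ m : ℕ, (2/3 : ℝ) ^ m < η / 9 :=
    exists_pow_lt_of_lt_one (by positivity) (by norm_num)
  have hkey : 8 * (2/3 : ℝ) ^ m < η := by
    have : (0:ℝ) < (2/3:ℝ)^m := by positivity
    linarith
  obtain ⟨δR, hδR, hR⟩ := right_side hq hsum hε α hα x hx m
  obtain ⟨δL, hδL, hL⟩ := left_side hq hsum hε α hα x hx m
  refine ⟨min δR δL, lt_min hδR hδL, ?_⟩
  intro y hy hdist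
  rw [Real.dist_eq] at hdist ⊢
  rcases lt_trichotomy y x with hlt | heq | hgt
  · have h1 : x - δL < y := by
      have h2 := (abs_lt.mp hdist).1
      have h3 := min_le_right δR δL
      linarith
    have := hL y hy hlt h1
    calc |F ε (α y) - F ε (α x)| ≤ 8 * (2/3:ℝ)^m := this
      _ < η := hkey
  · simp [heq, hη]
  · have h1 : y < x + δR := by
      have h2 := (abs_lt.mp hdist).2
      have h3 := min_le_left δR δL
      linarith
    have := hR y hy hgt h1
    calc |F ε (α y) - F ε (α x)| ≤ 8 * (2/3:ℝ)^m := this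
      _ < η := hkey
end

section
/- With the notation above, the set of values of f on [0,1] is exactly the interval [0,1], i.e., f is a continuous surjection from [0,1] onto [0,1] with f(0)=0 and f(1)=1. -/
open Finset

/-! Both `x` and `f x` are digit expansions of the same shape `Xval w α`, with the weights
`w = q` and `w = g` respectively (`F ε = Xval (gq ε)` holds by definition), and both take values
in `[0, 1]`. The weights `g` are bounded by `2/3`, so if the `q`-values of two digit sequences
are closer than the shortest rank-`n` cylinder, their `g`-values are within `2 (2/3)^n`: by
induction on `n` through the shift, the two sequences either share their first digit, or start
with adjacent digits and then both lie near the common endpoint of the two cylinders (the first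
and last cylinders are too far apart). This makes `f` continuous whatever digits `α x` are
chosen, gives `f 0 = 0` and `f 1 = 1`, and the intermediate value theorem gives surjectivity. -/

namespace QStar3

variable {w q : Fin 3 → ℕ → ℝ} {β γ : ℕ → Fin 3} {r : ℝ} {n : ℕ}

def shift (w : Fin 3 → ℕ → ℝ) : Fin 3 → ℕ → ℝ := fun i k => w i (k + 1)

def tail (β : ℕ → Fin 3) : ℕ → Fin 3 := fun k => β (k + 1)

noncomputable def digitTerm (w : Fin 3 → ℕ → ℝ) (β : ℕ → Fin 3) (k : ℕ) : ℝ :=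
  bq w (β k) k * ∏ j ∈ range k, w (β j) j

@[simp] lemma bq_zero (w : Fin 3 → ℕ → ℝ) (k : ℕ) : bq w 0 k = 0 := rfl

@[simp] lemma bq_one (w : Fin 3 → ℕ → ℝ) (k : ℕ) : bq w 1 k = w 0 k := rfl

@[simp] lemma bq_two (w : Fin 3 → ℕ → ℝ) (k : ℕ) : bq w 2 k = w 0 k + w 1 k := rfl

lemma bq_shift (w : Fin 3 → ℕ → ℝ) (i : Fin 3) (k : ℕ) :
    bq (shift w) i k = bq w i (k + 1) := rfl

lemma bq_succ (w : Fin 3 → ℕ → ℝ) (i : Fin 2) (k : ℕ) :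
    bq w i.succ k = bq w i.castSucc k + w i.castSucc k := by
  fin_cases i <;> simp [bq]

lemma Xval_eq_tsum (w : Fin 3 → ℕ → ℝ) (β : ℕ → Fin 3) :
    Xval w β = ∑' k, digitTerm w β k := rfl

lemma Xval_eq_bq_add_mul (hs : Summable (digitTerm w β)) :
    Xval w β = bq w (β 0) 0 + w (β 0) 0 * Xval (shift w) (tail β) := by
  rw [Xval_eq_tsum, hs.tsum_eq_zero_add, Xval, ← tsum_mul_left]
  simp only [digitTerm, range_zero, prod_empty, mul_one, prod_range_succ']
  congr 2
  funext k
  simp only [bq_shift, shift, tail]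
  ring

lemma Xval_eq_of_digit_eq_zero (hs : Summable (digitTerm w β)) (hβ : β 0 = 0) :
    Xval w β = w 0 0 * Xval (shift w) (tail β) := by
  rw [Xval_eq_bq_add_mul hs, hβ, bq_zero, zero_add]

lemma Xval_sub_Xval_of_digit_eq (hsβ : Summable (digitTerm w β))
    (hsγ : Summable (digitTerm w γ)) (h : β 0 = γ 0) :
    Xval w β - Xval w γ = w (β 0) 0 * (Xval (shift w) (tail β) - Xval (shift w) (tail γ)) := by
  rw [Xval_eq_bq_add_mul hsβ, Xval_eq_bq_add_mul hsγ, h]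
  ring

lemma Xval_sub_Xval_of_adjacent (hsβ : Summable (digitTerm w β))
    (hsγ : Summable (digitTerm w γ)) (i : Fin 2) (hβ : β 0 = i.castSucc) (hγ : γ 0 = i.succ) :
    Xval w γ - Xval w β = w i.castSucc 0 * (1 - Xval (shift w) (tail β))
      + w i.succ 0 * Xval (shift w) (tail γ) := by
  rw [Xval_eq_bq_add_mul hsβ, Xval_eq_bq_add_mul hsγ, hβ, hγ, bq_succ]
  ring

structure IsDigitWeights (w : Fin 3 → ℕ → ℝ) : Prop where
  sum_eq_one : ∀ k, w 0 k + w 1 k + w 2 k = 1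
  bq_mem : ∀ i k, bq w i k ∈ Set.Icc (0 : ℝ) 1

namespace IsDigitWeights

variable (hw : IsDigitWeights w)
include hw

lemma shift : IsDigitWeights (shift w) :=
  ⟨fun k => hw.sum_eq_one (k + 1), fun i k => hw.bq_mem i (k + 1)⟩

lemma bq_two_add (k : ℕ) : bq w 2 k + w 2 k = 1 := by
  rw [bq_two]; exact hw.sum_eq_one k

lemma bq_add_mem (i : Fin 3) (k : ℕ) : bq w i k + w i k ∈ Set.Icc (0 : ℝ) 1 := by
  fin_cases i
  · simpa using hw.bq_mem 1 k
  · simpa using hw.bq_mem 2 k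
  · simp [hw.sum_eq_one k]

lemma one_sub_Xval_eq (hs : Summable (digitTerm w β)) (hβ : β 0 = 2) :
    1 - Xval w β = w 2 0 * (1 - Xval (QStar3.shift w) (tail β)) := by
  rw [Xval_eq_bq_add_mul hs, hβ]
  linear_combination -(hw.bq_two_add 0)

/-- The partial sums and the endpoints of the current cylinder stay in `[0, 1]`: each step
replaces the cylinder by a sub-cylinder, i.e. by convex combinations of its endpoints. -/
lemma sum_range_mem (β : ℕ → Fin 3) (n : ℕ) :
    ∑ k ∈ range n, digitTerm w β k ∈ Set.Icc (0 : ℝ) 1 ∧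
      ∑ k ∈ range n, digitTerm w β k + ∏ j ∈ range n, w (β j) j ∈
        Set.Icc (0 : ℝ) 1 := by
  induction n with
  | zero => simp
  | succ n ih =>
    obtain ⟨hs, hsP⟩ := ih
    have hconv := fun {t : ℝ} (ht : t ∈ Set.Icc (0 : ℝ) 1) =>
      (convex_Icc (0 : ℝ) 1).add_smul_sub_mem hs hsP ht
    simp only [add_sub_cancel_left, smul_eq_mul] at hconv
    rw [sum_range_succ, prod_range_succ, digitTerm]
    constructor
    · convert hconv (hw.bq_mem (β n) n) using 1
    · convert hconv (hw.bq_add_mem (β n) n) using 1; ring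

lemma Xval_mem (hs : Summable (digitTerm w β)) : Xval w β ∈ Set.Icc (0 : ℝ) 1 :=
  isClosed_Icc.mem_of_tendsto hs.hasSum.tendsto_sum_nat
    (Filter.Eventually.of_forall fun n => (hw.sum_range_mem β n).1)

end IsDigitWeights

structure IsPosStochastic (q : Fin 3 → ℕ → ℝ) : Prop where
  pos : ∀ i k, 0 < q i k
  sum_eq_one : ∀ k, q 0 k + q 1 k + q 2 k = 1

/-- `minCylinderLength q n` is the length of the shortest cylinder of rank `n`. -/
noncomputable def minCylinderLength (q : Fin 3 → ℕ → ℝ) (n : ℕ) : ℝ :=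
  ∏ j ∈ range n, min (q 0 j) (min (q 1 j) (q 2 j))

lemma minCylinderLength_succ (q : Fin 3 → ℕ → ℝ) (n : ℕ) :
    minCylinderLength q (n + 1) =
      min (q 0 0) (min (q 1 0) (q 2 0)) * minCylinderLength (shift q) n := by
  rw [minCylinderLength, prod_range_succ', mul_comm]
  rfl

lemma min_three_le (q : Fin 3 → ℕ → ℝ) (i : Fin 3) (k : ℕ) :
    min (q 0 k) (min (q 1 k) (q 2 k)) ≤ q i k := by
  fin_cases i <;> simp

namespace IsPosStochastic

variable (hq : IsPosStochastic q)
include hq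

lemma shift : IsPosStochastic (shift q) :=
  ⟨fun i k => hq.pos i (k + 1), fun k => hq.sum_eq_one (k + 1)⟩

lemma isDigitWeights : IsDigitWeights q := by
  refine ⟨hq.sum_eq_one, fun i k => ?_⟩
  have := hq.pos 0 k; have := hq.pos 1 k; have := hq.pos 2 k; have := hq.sum_eq_one k
  fin_cases i <;> simp [bq] <;> constructor <;> linarith

lemma le_one (i : Fin 3) (k : ℕ) : q i k ≤ 1 := by
  have := hq.pos 0 k; have := hq.pos 1 k; have := hq.pos 2 k; have := hq.sum_eq_one k
  fin_cases i <;> simp <;> linarith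

lemma summable (β : ℕ → Fin 3) : Summable (digitTerm q β) :=
  summable_of_sum_range_le
    (fun _ => mul_nonneg (hq.isDigitWeights.bq_mem _ _).1 (prod_pos fun _ _ => hq.pos _ _).le)
    (fun n => (hq.isDigitWeights.sum_range_mem β n).1.2)

lemma Xval_mem (β : ℕ → Fin 3) : Xval q β ∈ Set.Icc (0 : ℝ) 1 :=
  hq.isDigitWeights.Xval_mem (hq.summable β)

lemma Xval_mem_cylinder (β : ℕ → Fin 3) :
    Xval q β ∈ Set.Icc (bq q (β 0) 0) (bq q (β 0) 0 + q (β 0) 0) := by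
  rw [Xval_eq_bq_add_mul (hq.summable β)]
  obtain ⟨h0, h1⟩ := hq.shift.Xval_mem (tail β)
  have := hq.pos (β 0) 0
  constructor <;> nlinarith

lemma minCylinderLength_pos (n : ℕ) : 0 < minCylinderLength q n :=
  prod_pos fun j _ => lt_min (hq.pos 0 j) (lt_min (hq.pos 1 j) (hq.pos 2 j))

lemma minCylinderLength_le_one (n : ℕ) : minCylinderLength q n ≤ 1 :=
  prod_le_one (fun j _ => (lt_min (hq.pos 0 j) (lt_min (hq.pos 1 j) (hq.pos 2 j))).le)
    fun j _ => (min_three_le q 0 j).trans (hq.le_one 0 j)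

lemma minCylinderLength_succ_le (i : Fin 3) (n : ℕ) :
    minCylinderLength q (n + 1) ≤ q i 0 * minCylinderLength (QStar3.shift q) n := by
  rw [minCylinderLength_succ]
  exact mul_le_mul_of_nonneg_right (min_three_le q i 0)
    (hq.shift.minCylinderLength_pos n).le

lemma minCylinderLength_succ_le_self (i : Fin 3) (n : ℕ) :
    minCylinderLength q (n + 1) ≤ q i 0 :=
  (hq.minCylinderLength_succ_le i n).trans
    (mul_le_of_le_one_right (hq.pos i 0).le (hq.shift.minCylinderLength_le_one n))

lemma lt_minCylinderLength_shift {a : ℝ} (i : Fin 3)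
    (h : q i 0 * a < minCylinderLength q (n + 1)) : a < minCylinderLength (QStar3.shift q) n :=
  lt_of_mul_lt_mul_left (h.trans_le (hq.minCylinderLength_succ_le i n)) (hq.pos i 0).le

lemma digit_eq_zero_of_Xval_lt (h : Xval q β < q 0 0) : β 0 = 0 := by
  have hX := (hq.Xval_mem_cylinder β).1
  have := hq.pos 1 0
  generalize β 0 = i at hX ⊢
  fin_cases i <;> simp [bq] at hX ⊢ <;> linarith

lemma digit_eq_two_of_one_sub_Xval_lt (h : 1 - Xval q β < q 2 0) : β 0 = 2 := by
  have hX := (hq.Xval_mem_cylinder β).2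
  have := hq.pos 1 0; have := hq.sum_eq_one 0
  generalize β 0 = i at hX ⊢
  fin_cases i <;> simp [bq] at hX ⊢ <;> linarith

lemma minCylinderLength_le_abs_sub (hβ : β 0 = 0) (hγ : γ 0 = 2) (n : ℕ) :
    minCylinderLength q (n + 1) ≤ |Xval q β - Xval q γ| := by
  have hXβ := (hq.Xval_mem_cylinder β).2
  have hXγ := (hq.Xval_mem_cylinder γ).1
  rw [hβ, bq_zero, zero_add] at hXβ
  rw [hγ, bq_two] at hXγ
  have := hq.minCylinderLength_succ_le_self 1 n
  rw [abs_sub_comm, abs_of_nonneg (by linarith [hq.pos 1 0])]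
  linarith

end IsPosStochastic

structure IsContractingWeights (w : Fin 3 → ℕ → ℝ) (r : ℝ) : Prop
    extends IsDigitWeights w where
  abs_le : ∀ i k, |w i k| ≤ r
  lt_one : r < 1

namespace IsContractingWeights

variable (hw : IsContractingWeights w r)
include hw

lemma shift : IsContractingWeights (shift w) r :=
  { hw.toIsDigitWeights.shift with
    abs_le := fun i k => hw.abs_le i (k + 1)
    lt_one := hw.lt_one }

lemma nonneg : 0 ≤ r := (abs_nonneg _).trans (hw.abs_le 0 0)

lemma summable (β : ℕ → Fin 3) : Summable (digitTerm w β) := by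
  refine Summable.of_norm_bounded (summable_geometric_of_lt_one hw.nonneg hw.lt_one) fun k => ?_
  rw [digitTerm, Real.norm_eq_abs, abs_mul, abs_prod]
  calc |bq w (β k) k| * ∏ j ∈ range k, |w (β j) j| ≤ 1 * ∏ _j ∈ range k, r := by
        gcongr with j
        · exact (abs_of_nonneg (hw.bq_mem (β k) k).1).trans_le (hw.bq_mem (β k) k).2
        · exact hw.abs_le _ _
    _ = r ^ k := by simp

lemma Xval_mem (β : ℕ → Fin 3) : Xval w β ∈ Set.Icc (0 : ℝ) 1 :=
  hw.toIsDigitWeights.Xval_mem (hw.summable β)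

end IsContractingWeights

lemma fin_three_cases_of_le {a b : Fin 3} (h : a ≤ b) :
    a = b ∨ (∃ i : Fin 2, a = i.castSucc ∧ b = i.succ) ∨ (a = 0 ∧ b = 2) := by
  revert a b
  decide

lemma eq_zero_of_forall_abs_le_pow (h0 : 0 ≤ r) (h1 : r < 1) {a : ℝ}
    (h : ∀ n : ℕ, |a| ≤ r ^ n) : a = 0 :=
  abs_nonpos_iff.1 (ge_of_tendsto' (tendsto_pow_atTop_nhds_zero_of_lt_one h0 h1) h)

section Estimates

variable (hq : IsPosStochastic q) (hw : IsContractingWeights w r)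
include hq hw

theorem abs_Xval_le_of_Xval_lt (h : Xval q β < minCylinderLength q n) : |Xval w β| ≤ r ^ n := by
  induction n generalizing q w β with
  | zero =>
    rw [pow_zero, abs_of_nonneg (hw.Xval_mem β).1]
    exact (hw.Xval_mem β).2
  | succ n ih =>
    have hβ : β 0 = 0 :=
      hq.digit_eq_zero_of_Xval_lt (h.trans_le (hq.minCylinderLength_succ_le_self 0 n))
    have h' := hq.lt_minCylinderLength_shift 0
      (by rwa [← Xval_eq_of_digit_eq_zero (hq.summable β) hβ])
    rw [Xval_eq_of_digit_eq_zero (hw.summable β) hβ, abs_mul, pow_succ']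
    exact mul_le_mul (hw.abs_le 0 0) (ih hq.shift hw.shift h') (abs_nonneg _) hw.nonneg

theorem abs_one_sub_Xval_le_of_one_sub_Xval_lt (h : 1 - Xval q β < minCylinderLength q n) :
    |1 - Xval w β| ≤ r ^ n := by
  induction n generalizing q w β with
  | zero =>
    rw [pow_zero, abs_of_nonneg (sub_nonneg.2 (hw.Xval_mem β).2)]
    linarith [(hw.Xval_mem β).1]
  | succ n ih =>
    have hβ : β 0 = 2 :=
      hq.digit_eq_two_of_one_sub_Xval_lt (h.trans_le (hq.minCylinderLength_succ_le_self 2 n))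
    have h' := hq.lt_minCylinderLength_shift 2
      (by rwa [← hq.isDigitWeights.one_sub_Xval_eq (hq.summable β) hβ])
    rw [hw.one_sub_Xval_eq (hw.summable β) hβ, abs_mul, pow_succ']
    exact mul_le_mul (hw.abs_le 2 0) (ih hq.shift hw.shift h') (abs_nonneg _) hw.nonneg

theorem abs_Xval_sub_le_of_adjacent (i : Fin 2) (hβ : β 0 = i.castSucc) (hγ : γ 0 = i.succ)
    (h : |Xval q γ - Xval q β| < minCylinderLength q (n + 1)) :
    |Xval w γ - Xval w β| ≤ 2 * r ^ (n + 1) := by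
  obtain ⟨hXβ, hXβ'⟩ := hq.shift.Xval_mem (tail β)
  obtain ⟨hXγ, -⟩ := hq.shift.Xval_mem (tail γ)
  have hpβ := hq.pos i.castSucc 0
  have hpγ := hq.pos i.succ 0
  rw [Xval_sub_Xval_of_adjacent (hq.summable β) (hq.summable γ) i hβ hγ,
    abs_of_nonneg (by nlinarith)] at h
  have hβ' := abs_one_sub_Xval_le_of_one_sub_Xval_lt hq.shift hw.shift
    (hq.lt_minCylinderLength_shift i.castSucc (by nlinarith))
  have hγ' := abs_Xval_le_of_Xval_lt hq.shift hw.shift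
    (hq.lt_minCylinderLength_shift i.succ (by nlinarith))
  have hwβ := hw.abs_le i.castSucc 0
  have hwγ := hw.abs_le i.succ 0
  rw [Xval_sub_Xval_of_adjacent (hw.summable β) (hw.summable γ) i hβ hγ]
  calc _ ≤ |w i.castSucc 0| * |1 - Xval (shift w) (tail β)|
        + |w i.succ 0| * |Xval (shift w) (tail γ)| :=
        (abs_add_le _ _).trans_eq (by rw [abs_mul, abs_mul])
    _ ≤ r * r ^ n + r * r ^ n := by gcongr <;> exact hw.nonneg
    _ = 2 * r ^ (n + 1) := by ring

theorem abs_Xval_sub_le_of_abs_Xval_sub_lt (h : |Xval q β - Xval q γ| < minCylinderLength q n) :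
    |Xval w β - Xval w γ| ≤ 2 * r ^ n := by
  induction n generalizing q w β γ with
  | zero =>
    obtain ⟨hβ0, hβ1⟩ := hw.Xval_mem β
    obtain ⟨hγ0, hγ1⟩ := hw.Xval_mem γ
    rw [pow_zero, abs_sub_le_iff]
    constructor <;> linarith
  | succ n ih =>
    wlog hle : β 0 ≤ γ 0 generalizing β γ
    · rw [abs_sub_comm] at h ⊢
      exact this h (le_of_not_ge hle)
    obtain heq | ⟨i, hβ, hγ⟩ | ⟨hβ, hγ⟩ := fin_three_cases_of_le hle
    · rw [Xval_sub_Xval_of_digit_eq (hq.summable β) (hq.summable γ) heq, abs_mul,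
        abs_of_pos (hq.pos _ _)] at h
      rw [Xval_sub_Xval_of_digit_eq (hw.summable β) (hw.summable γ) heq, abs_mul, pow_succ',
        mul_left_comm]
      exact mul_le_mul (hw.abs_le _ _) (ih hq.shift hw.shift (hq.lt_minCylinderLength_shift _ h))
        (abs_nonneg _) hw.nonneg
    · rw [abs_sub_comm] at h ⊢
      exact abs_Xval_sub_le_of_adjacent hq hw i hβ hγ h
    · exact absurd h (not_lt.2 (hq.minCylinderLength_le_abs_sub hβ hγ n))

theorem continuousOn_Xval_comp {α : ℝ → ℕ → Fin 3} {s : Set ℝ}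
    (hα : ∀ x ∈ s, Xval q (α x) = x) : ContinuousOn (fun x => Xval w (α x)) s := by
  refine Metric.continuousOn_iff.2 fun x hx e he => ?_
  obtain ⟨n, hn⟩ := exists_pow_lt_of_lt_one (half_pos he) hw.lt_one
  refine ⟨minCylinderLength q n, hq.minCylinderLength_pos n, fun y hy hyx => ?_⟩
  rw [Real.dist_eq] at hyx ⊢
  calc |Xval w (α y) - Xval w (α x)| ≤ 2 * r ^ n :=
        abs_Xval_sub_le_of_abs_Xval_sub_lt hq hw (by rwa [hα y hy, hα x hx])
    _ < e := by linarith

theorem Xval_eq_zero_of_Xval_eq_zero (h : Xval q β = 0) : Xval w β = 0 :=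
  eq_zero_of_forall_abs_le_pow hw.nonneg hw.lt_one fun n =>
    abs_Xval_le_of_Xval_lt hq hw (h ▸ hq.minCylinderLength_pos n)

theorem Xval_eq_one_of_Xval_eq_one (h : Xval q β = 1) : Xval w β = 1 :=
  (sub_eq_zero.1 (eq_zero_of_forall_abs_le_pow hw.nonneg hw.lt_one fun n =>
    abs_one_sub_Xval_le_of_one_sub_Xval_lt hq hw
      (by rw [h, sub_self]; exact hq.minCylinderLength_pos n))).symm

end Estimates

lemma isContractingWeights_gq {ε : ℕ → ℝ} (hε : ∀ k, 0 ≤ ε k ∧ ε k ≤ 1) :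
    IsContractingWeights (gq ε) (2 / 3) where
  sum_eq_one k := by simp [gq]; ring
  bq_mem i k := by
    obtain ⟨h0, h1⟩ := hε k
    fin_cases i <;> simp [gq] <;> constructor <;> linarith
  abs_le i k := by
    obtain ⟨h0, h1⟩ := hε k
    fin_cases i <;> simp [gq, abs_le] <;> constructor <;> linarith
  lt_one := by norm_num

end QStar3

open QStar3

theorem stmt8 (q : Fin 3 → ℕ → ℝ) (hq : ∀ i k, 0 < q i k)
    (hsum : ∀ k, q 0 k + q 1 k + q 2 k = 1)
    (ε : ℕ → ℝ) (hε : ∀ k, 0 ≤ ε k ∧ ε k ≤ 1)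
    (α : ℝ → ℕ → Fin 3) (hα : ∀ x ∈ Set.Icc (0 : ℝ) 1, Xval q (α x) = x) :
    ContinuousOn (fun x => F ε (α x)) (Set.Icc (0 : ℝ) 1) ∧
    F ε (α 0) = 0 ∧ F ε (α 1) = 1 ∧
    (fun x => F ε (α x)) '' Set.Icc (0 : ℝ) 1 = Set.Icc (0 : ℝ) 1 := by
  have hQ : IsPosStochastic q := ⟨hq, hsum⟩
  have hW := isContractingWeights_gq hε
  have h0 : F ε (α 0) = 0 := Xval_eq_zero_of_Xval_eq_zero hQ hW (hα 0 (by norm_num))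
  have h1 : F ε (α 1) = 1 := Xval_eq_one_of_Xval_eq_one hQ hW (hα 1 (by norm_num))
  have hcont : ContinuousOn (fun x => F ε (α x)) (Set.Icc 0 1) := continuousOn_Xval_comp hQ hW hα
  refine ⟨hcont, h0, h1, subset_antisymm ?_ ?_⟩
  · rintro _ ⟨x, -, rfl⟩
    exact hW.Xval_mem (α x)
  · simpa [h0, h1] using intermediate_value_Icc zero_le_one hcont
end

section
/- If 1/2 < ε_k ≤ 1 for every k ∈ ℕ, then the continuous function f is nowhere monotone on [0,1]: there is no nondegenerate subinterval (a,b) ⊆ [0,1] on which f is monotone. -/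
open Finset

/-!
Both `x` and `f x` are sums of the same digit series `value w γ = ∑ₖ offset w γₖ k ∏_{j<k} w γⱼ j`,
with `w = q` and `w = g` respectively, and in both cases each digit map
`t ↦ offset w i k + w i k * t` sends `[0, 1]` into itself.
The two expansions `…i222…` and `…(i+1)000…` of an endpoint of adjacent cylinders always have the
same value, and for positive weights these are the only coincidences; hence `F` is constant on the
fibres of `Xval`. As `Xval` is a continuous surjection from the compact space `ℕ → Fin 3` onto
`[0, 1]`, it is a quotient map, so `f` is continuous.
Every interval contains a cylinder, on which `f` increases by the signed product `∏ g`; its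
subcylinders `0` and `1` have increments of opposite signs since `g₀ > 0 > g₁`.
-/

open Filter Topology Set

namespace Q3

variable (w : Fin 3 → ℕ → ℝ)

/-- The digit `i` at position `k` acts by `t ↦ offset w i k + w i k * t`. Definitionally
`bq q = offset q`, `dq ε = offset (gq ε)`, `Xval q = value q` and `F ε = value (gq ε)`. -/
def offset (i : Fin 3) (k : ℕ) : ℝ :=
  if i = 0 then 0 else if i = 1 then w 0 k else w 0 k + w 1 k

def term (γ : ℕ → Fin 3) (k : ℕ) : ℝ :=
  offset w (γ k) k * ∏ j ∈ range k, w (γ j) j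

noncomputable def value (γ : ℕ → Fin 3) : ℝ :=
  ∑' k, term w γ k

def partialValue (γ : ℕ → Fin 3) (n : ℕ) : ℝ :=
  ∑ k ∈ range n, term w γ k

def weight (γ : ℕ → Fin 3) (n : ℕ) : ℝ :=
  ∏ j ∈ range n, w (γ j) j

def shift (n : ℕ) : Fin 3 → ℕ → ℝ :=
  fun i k => w i (n + k)

def MapsUnit : Prop :=
  ∀ i k, ∀ t ∈ Icc (0 : ℝ) 1, offset w i k + w i k * t ∈ Icc (0 : ℝ) 1

variable {w}

lemma offset_zero (k : ℕ) : offset w 0 k = 0 := rfl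

lemma offset_one (k : ℕ) : offset w 1 k = w 0 k := rfl

lemma offset_two (k : ℕ) : offset w 2 k = w 0 k + w 1 k := rfl

lemma offset_two_add (hsum : ∀ k, w 0 k + w 1 k + w 2 k = 1) (k : ℕ) :
    offset w 2 k + w 2 k = 1 := hsum k

lemma offset_shift (n : ℕ) (i : Fin 3) (k : ℕ) : offset (shift w n) i k = offset w i (n + k) :=
  rfl

lemma offset_eq_add_of_val_eq_succ {i i' : Fin 3} (h : (i' : ℕ) = i + 1) (k : ℕ) :
    offset w i' k = offset w i k + w i k := by
  fin_cases i <;> fin_cases i' <;> simp_all [offset]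

lemma MapsUnit.shift (hmaps : MapsUnit w) (n : ℕ) : MapsUnit (shift w n) :=
  fun i k => hmaps i (n + k)

lemma MapsUnit.offset_mem (hmaps : MapsUnit w) (i : Fin 3) (k : ℕ) :
    offset w i k ∈ Icc (0 : ℝ) 1 := by
  simpa using hmaps i k 0 (by simp)

lemma term_add (γ : ℕ → Fin 3) (n k : ℕ) :
    term w γ (n + k) = weight w γ n * term (shift w n) (fun j => γ (n + j)) k := by
  simp only [term, weight, offset_shift, shift, prod_range_add]
  ring

lemma weight_add (γ : ℕ → Fin 3) (n m : ℕ) :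
    weight w γ (n + m) = weight w γ n * weight (shift w n) (fun j => γ (n + j)) m :=
  prod_range_add _ n m

lemma partialValue_add (γ : ℕ → Fin 3) (n m : ℕ) :
    partialValue w γ (n + m) =
      partialValue w γ n + weight w γ n * partialValue (shift w n) (fun j => γ (n + j)) m := by
  simp only [partialValue, sum_range_add, term_add, mul_sum]

lemma partialValue_one (γ : ℕ → Fin 3) : partialValue w γ 1 = offset w (γ 0) 0 := by
  simp [partialValue, term]

lemma weight_one (γ : ℕ → Fin 3) : weight w γ 1 = w (γ 0) 0 := by
  simp [weight]

lemma partialValue_succ (γ : ℕ → Fin 3) (n : ℕ) :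
    partialValue w γ (n + 1) = partialValue w γ n + weight w γ n * offset w (γ n) n := by
  simp only [partialValue, sum_range_succ, term, weight]
  ring

lemma weight_succ (γ : ℕ → Fin 3) (n : ℕ) :
    weight w γ (n + 1) = weight w γ n * w (γ n) n :=
  prod_range_succ _ n

lemma partialValue_congr {γ γ' : ℕ → Fin 3} {n : ℕ} (h : ∀ j < n, γ j = γ' j) :
    partialValue w γ n = partialValue w γ' n := by
  refine sum_congr rfl fun k hk => ?_
  have hk := mem_range.1 hk
  simp only [term, h k hk]
  congr 1
  exact prod_congr rfl fun j hj => by rw [h j ((mem_range.1 hj).trans hk)]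

lemma weight_congr {γ γ' : ℕ → Fin 3} {n : ℕ} (h : ∀ j < n, γ j = γ' j) :
    weight w γ n = weight w γ' n :=
  prod_congr rfl fun j hj => by rw [h j (mem_range.1 hj)]

lemma value_eq_partialValue_add (γ : ℕ → Fin 3) (hs : Summable (term w γ)) (n : ℕ) :
    value w γ = partialValue w γ n + weight w γ n * value (shift w n) (fun j => γ (n + j)) := by
  rw [value, ← hs.sum_add_tsum_nat_add n, value, ← tsum_mul_left]
  simp only [partialValue, add_comm _ n, term_add]

lemma value_eq_offset_add (γ : ℕ → Fin 3) (hs : Summable (term w γ)) :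
    value w γ = offset w (γ 0) 0 + w (γ 0) 0 * value (shift w 1) (fun j => γ (1 + j)) := by
  rw [value_eq_partialValue_add γ hs 1, partialValue_one, weight_one]

lemma shift_zero : shift w 0 = w := by
  funext i k; simp [shift]

lemma partialValue_add_weight_mul_mem_Icc (hmaps : MapsUnit w) (γ : ℕ → Fin 3) (n : ℕ) :
    ∀ t ∈ Icc (0 : ℝ) 1, partialValue w γ n + weight w γ n * t ∈ Icc (0 : ℝ) 1 := by
  induction n generalizing w γ with
  | zero => simp [partialValue, weight]
  | succ n ih =>
    intro t ht
    have hinner := ih (hmaps.shift 1) (fun j => γ (1 + j)) t ht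
    rw [add_comm n 1, partialValue_add, weight_add, partialValue_one, weight_one]
    convert hmaps (γ 0) 0 _ hinner using 1
    ring

lemma value_mem_Icc (hmaps : MapsUnit w) {γ : ℕ → Fin 3} (hs : Summable (term w γ)) :
    value w γ ∈ Icc (0 : ℝ) 1 :=
  isClosed_Icc.mem_of_tendsto hs.hasSum.tendsto_sum_nat <| Eventually.of_forall fun n => by
    simpa [partialValue] using partialValue_add_weight_mul_mem_Icc hmaps γ n 0 (by simp)

lemma summable_term_of_nonneg (hw : ∀ i k, 0 ≤ w i k) (hmaps : MapsUnit w) (γ : ℕ → Fin 3) :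
    Summable (term w γ) :=
  summable_of_sum_range_le
    (fun k => mul_nonneg (hmaps.offset_mem _ _).1 (prod_nonneg fun j _ => hw _ _))
    fun n => by
      simpa [partialValue] using (partialValue_add_weight_mul_mem_Icc hmaps γ n 0 (by simp)).2

lemma abs_weight_le {ρ : ℝ} (hρ : ∀ i k, |w i k| ≤ ρ) (γ : ℕ → Fin 3) (n : ℕ) :
    |weight w γ n| ≤ ρ ^ n := by
  rw [weight, abs_prod]
  exact (prod_le_prod (fun _ _ => abs_nonneg _) fun j _ => hρ _ _).trans (by simp)

lemma summable_term_of_abs_le (hmaps : MapsUnit w) {ρ : ℝ} (hρ : ∀ i k, |w i k| ≤ ρ)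
    (hρ1 : ρ < 1) (γ : ℕ → Fin 3) : Summable (term w γ) := by
  refine Summable.of_norm_bounded
    (summable_geometric_of_lt_one ((abs_nonneg _).trans (hρ 0 0)) hρ1) fun k => ?_
  rw [Real.norm_eq_abs, term, abs_mul, ← one_mul (ρ ^ k)]
  have hoff := hmaps.offset_mem (γ k) k
  exact mul_le_mul (abs_le.2 ⟨by linarith [hoff.1], hoff.2⟩) (abs_weight_le hρ γ k)
    (abs_nonneg _) zero_le_one

lemma tendsto_weight_of_abs_le {ρ : ℝ} (hρ : ∀ i k, |w i k| ≤ ρ) (hρ1 : ρ < 1)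
    (γ : ℕ → Fin 3) : Tendsto (weight w γ) atTop (𝓝 0) :=
  squeeze_zero_norm (abs_weight_le hρ γ)
    (tendsto_pow_atTop_nhds_zero_of_lt_one ((abs_nonneg _).trans (hρ 0 0)) hρ1)

lemma value_eq_one_of_forall_eq_two (hsum : ∀ k, w 0 k + w 1 k + w 2 k = 1)
    {γ : ℕ → Fin 3} (hs : Summable (term w γ)) (hlim : Tendsto (weight w γ) atTop (𝓝 0))
    (h2 : ∀ k, γ k = 2) : value w γ = 1 := by
  have hpartial : ∀ n, partialValue w γ n = 1 - weight w γ n := by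
    intro n
    induction n with
    | zero => simp [partialValue, weight]
    | succ n ih =>
      rw [partialValue_succ, ih, weight_succ, h2]
      linear_combination weight w γ n * offset_two_add hsum n
  have hlim' : Tendsto (partialValue w γ) atTop (𝓝 1) := by
    rw [funext hpartial]
    simpa using (tendsto_const_nhds (x := (1 : ℝ))).sub hlim
  exact tendsto_nhds_unique hs.hasSum.tendsto_sum_nat hlim'

lemma abs_value_sub_le (hmaps : MapsUnit w) (hs : ∀ n γ, Summable (term (shift w n) γ))
    {γ γ' : ℕ → Fin 3} {n : ℕ} (h : ∀ j < n, γ j = γ' j) :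
    |value w γ - value w γ'| ≤ |weight w γ n| := by
  have hs0 : ∀ γ, Summable (term w γ) := by simpa [shift_zero] using hs 0
  rw [value_eq_partialValue_add γ (hs0 γ) n, value_eq_partialValue_add γ' (hs0 γ') n,
    partialValue_congr h, weight_congr h, add_sub_add_left_eq_sub, ← mul_sub, abs_mul]
  have ht := value_mem_Icc (hmaps.shift n) (hs n fun j => γ (n + j))
  have ht' := value_mem_Icc (hmaps.shift n) (hs n fun j => γ' (n + j))
  refine mul_le_of_le_one_right (abs_nonneg _) (abs_le.2 ⟨?_, ?_⟩) <;>
    linarith [ht.1, ht.2, ht'.1, ht'.2]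

lemma continuous_value (hmaps : MapsUnit w) (hs : ∀ n γ, Summable (term (shift w n) γ))
    (hlim : ∀ γ, Tendsto (weight w γ) atTop (𝓝 0)) : Continuous (value w) := by
  refine continuous_iff_continuousAt.2 fun γ => Metric.tendsto_nhds.2 fun r hr => ?_
  obtain ⟨n, hn⟩ := ((hlim γ).abs.eventually (gt_mem_nhds (by simpa using hr))).exists
  have hagree : ∀ᶠ γ' in 𝓝 γ, ∀ j < n, γ j = γ' j := by
    refine (Set.finite_lt_nat n).eventually_all.2 fun j _ => ?_
    exact (continuous_apply j).continuousAt.eventually_mem (isOpen_discrete {γ j} |>.mem_nhds rfl)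
      |>.mono fun γ' h => (Set.mem_singleton_iff.1 h).symm
  filter_upwards [hagree] with γ' h
  rw [Real.dist_eq, abs_sub_comm]
  exact (abs_value_sub_le hmaps hs h).trans_lt (by simpa using hn)

/-- `γ` and `γ'` are the two expansions `c₁…c_{r-1} i 2 2 2 …` and `c₁…c_{r-1} (i+1) 0 0 0 …`
of a common endpoint of two adjacent cylinders. -/
def IsCarryPair (γ γ' : ℕ → Fin 3) : Prop :=
  ∃ r, (∀ j < r, γ j = γ' j) ∧ (γ' r : ℕ) = γ r + 1 ∧ ∀ j, r < j → γ j = 2 ∧ γ' j = 0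

lemma value_eq_zero_of_forall_eq_zero {γ : ℕ → Fin 3} (h0 : ∀ k, γ k = 0) : value w γ = 0 := by
  simp [value, term, h0, offset_zero]

lemma value_eq_of_isCarryPair (hsum : ∀ k, w 0 k + w 1 k + w 2 k = 1) (hmaps : MapsUnit w)
    {ρ : ℝ} (hρ : ∀ i k, |w i k| ≤ ρ) (hρ1 : ρ < 1) {γ γ' : ℕ → Fin 3} (h : IsCarryPair γ γ') :
    value w γ = value w γ' := by
  obtain ⟨r, hagree, hsucc, htail⟩ := h
  have hs : ∀ n γ, Summable (term (shift w n) γ) := fun n =>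
    summable_term_of_abs_le (hmaps.shift n) (fun i k => hρ i (n + k)) hρ1
  have hs' : ∀ n m γ, Summable (term (shift (shift w n) m) γ) := fun n m =>
    summable_term_of_abs_le ((hmaps.shift n).shift m) (fun i k => hρ i (n + (m + k))) hρ1
  rw [value_eq_partialValue_add γ (summable_term_of_abs_le hmaps hρ hρ1 γ) r,
    value_eq_partialValue_add γ' (summable_term_of_abs_le hmaps hρ hρ1 γ') r,
    partialValue_congr hagree, weight_congr hagree,
    value_eq_offset_add _ (hs r _), value_eq_offset_add _ (hs r _),
    value_eq_one_of_forall_eq_two (fun k => hsum (r + (1 + k))) (hs' r 1 _)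
      (tendsto_weight_of_abs_le (fun i k => hρ i (r + (1 + k))) hρ1 _)
      (fun k => (htail _ (by omega)).1),
    value_eq_zero_of_forall_eq_zero (fun k => (htail _ (by omega)).2)]
  simp only [add_zero, mul_one, mul_zero, offset_eq_add_of_val_eq_succ hsucc]

lemma mapsUnit_of_pos (hpos : ∀ i k, 0 < w i k) (hsum : ∀ k, w 0 k + w 1 k + w 2 k = 1) :
    MapsUnit w := by
  intro i k t ht
  have := hpos 0 k; have := hpos 1 k; have := hpos 2 k; have := hsum k
  obtain ⟨ht0, ht1⟩ := ht
  fin_cases i <;> simp [offset] <;> constructor <;> nlinarith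

lemma summable_term_of_pos (hpos : ∀ i k, 0 < w i k) (hsum : ∀ k, w 0 k + w 1 k + w 2 k = 1)
    (γ : ℕ → Fin 3) : Summable (term w γ) :=
  summable_term_of_nonneg (fun i k => (hpos i k).le) (mapsUnit_of_pos hpos hsum) γ

lemma offset_add_mul_le (hpos : ∀ i k, 0 < w i k) {i i' : Fin 3} (hlt : i < i') (k : ℕ)
    {t t' : ℝ} (ht : t ∈ Icc (0 : ℝ) 1) (ht' : t' ∈ Icc (0 : ℝ) 1) :
    offset w i k + w i k * t ≤ offset w i' k + w i' k * t' := by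
  have := hpos 0 k; have := hpos 1 k; have := hpos 2 k
  obtain ⟨ht0, ht1⟩ := ht; obtain ⟨ht0', ht1'⟩ := ht'
  fin_cases i <;> fin_cases i' <;> simp [offset] at hlt ⊢ <;> nlinarith

lemma carry_of_offset_add_mul_eq (hpos : ∀ i k, 0 < w i k) {i i' : Fin 3} (hlt : i < i') (k : ℕ)
    {t t' : ℝ} (ht : t ∈ Icc (0 : ℝ) 1) (ht' : t' ∈ Icc (0 : ℝ) 1)
    (h : offset w i k + w i k * t = offset w i' k + w i' k * t') :
    (i' : ℕ) = i + 1 ∧ t = 1 ∧ t' = 0 := by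
  have := hpos 0 k; have := hpos 1 k; have := hpos 2 k
  obtain ⟨ht0, ht1⟩ := ht; obtain ⟨ht0', ht1'⟩ := ht'
  fin_cases i <;> fin_cases i' <;> simp [offset] at hlt h ⊢ <;>
    first | (constructor <;> nlinarith) | nlinarith

lemma weight_pos (hpos : ∀ i k, 0 < w i k) (γ : ℕ → Fin 3) (n : ℕ) : 0 < weight w γ n :=
  prod_pos fun _ _ => hpos _ _

lemma value_shift_mem_Icc (hpos : ∀ i k, 0 < w i k) (hsum : ∀ k, w 0 k + w 1 k + w 2 k = 1)
    (n : ℕ) (γ : ℕ → Fin 3) : value (shift w n) γ ∈ Icc (0 : ℝ) 1 :=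
  value_mem_Icc ((mapsUnit_of_pos hpos hsum).shift n)
    (summable_term_of_pos (fun i k => hpos i (n + k)) (fun k => hsum (n + k)) γ)

lemma head_eq_two_of_value_eq_one (hpos : ∀ i k, 0 < w i k)
    (hsum : ∀ k, w 0 k + w 1 k + w 2 k = 1) {γ : ℕ → Fin 3} (h : value w γ = 1) :
    γ 0 = 2 ∧ value (shift w 1) (fun j => γ (1 + j)) = 1 := by
  have ht := value_shift_mem_Icc hpos hsum 1 fun j => γ (1 + j)
  rw [value_eq_offset_add γ (summable_term_of_pos hpos hsum γ), ← offset_two_add hsum 0,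
    ← mul_one (w 2 0)] at h
  have h2 : γ 0 = 2 := by
    by_contra hne
    have := (carry_of_offset_add_mul_eq hpos (Ne.lt_of_le hne (Fin.le_last _)) 0 ht
      (right_mem_Icc.2 zero_le_one) h).2.2
    norm_num at this
  rw [h2, add_right_inj] at h
  exact ⟨h2, mul_left_cancel₀ (hpos 2 0).ne' h⟩

lemma head_eq_zero_of_value_eq_zero (hpos : ∀ i k, 0 < w i k)
    (hsum : ∀ k, w 0 k + w 1 k + w 2 k = 1) {γ : ℕ → Fin 3} (h : value w γ = 0) :
    γ 0 = 0 ∧ value (shift w 1) (fun j => γ (1 + j)) = 0 := by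
  have ht := value_shift_mem_Icc hpos hsum 1 fun j => γ (1 + j)
  rw [value_eq_offset_add γ (summable_term_of_pos hpos hsum γ)] at h
  have h0 : γ 0 = 0 := by
    by_contra hne
    have := (carry_of_offset_add_mul_eq hpos (Fin.pos_iff_ne_zero.2 hne) 0
      (left_mem_Icc.2 zero_le_one) ht (by simpa [offset_zero] using h.symm)).2.1
    norm_num at this
  rw [h0, offset_zero, zero_add] at h
  exact ⟨h0, (mul_eq_zero.1 h).resolve_left (hpos 0 0).ne'⟩

lemma forall_eq_two_of_value_eq_one (hpos : ∀ i k, 0 < w i k)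
    (hsum : ∀ k, w 0 k + w 1 k + w 2 k = 1) {γ : ℕ → Fin 3} (h : value w γ = 1) (k : ℕ) :
    γ k = 2 := by
  induction k generalizing w γ with
  | zero => exact (head_eq_two_of_value_eq_one hpos hsum h).1
  | succ k ih =>
    rw [add_comm]
    exact ih (fun i k => hpos i (1 + k)) (fun k => hsum (1 + k))
      (head_eq_two_of_value_eq_one hpos hsum h).2

lemma forall_eq_zero_of_value_eq_zero (hpos : ∀ i k, 0 < w i k)
    (hsum : ∀ k, w 0 k + w 1 k + w 2 k = 1) {γ : ℕ → Fin 3} (h : value w γ = 0) (k : ℕ) :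
    γ k = 0 := by
  induction k generalizing w γ with
  | zero => exact (head_eq_zero_of_value_eq_zero hpos hsum h).1
  | succ k ih =>
    rw [add_comm]
    exact ih (fun i k => hpos i (1 + k)) (fun k => hsum (1 + k))
      (head_eq_zero_of_value_eq_zero hpos hsum h).2

lemma carry_of_value_eq_of_head_lt (hpos : ∀ i k, 0 < w i k)
    (hsum : ∀ k, w 0 k + w 1 k + w 2 k = 1) {γ γ' : ℕ → Fin 3} (h : value w γ = value w γ')
    (hlt : γ 0 < γ' 0) : (γ' 0 : ℕ) = γ 0 + 1 ∧ ∀ j, 0 < j → γ j = 2 ∧ γ' j = 0 := by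
  rw [value_eq_offset_add γ (summable_term_of_pos hpos hsum γ),
    value_eq_offset_add γ' (summable_term_of_pos hpos hsum γ')] at h
  obtain ⟨hsucc, h1, h0⟩ := carry_of_offset_add_mul_eq hpos hlt 0
    (value_shift_mem_Icc hpos hsum 1 _) (value_shift_mem_Icc hpos hsum 1 _) h
  refine ⟨hsucc, fun j hj => ?_⟩
  obtain ⟨j, rfl⟩ : ∃ j', j = 1 + j' := ⟨j - 1, by omega⟩
  exact ⟨forall_eq_two_of_value_eq_one (fun i k => hpos i (1 + k)) (fun k => hsum (1 + k)) h1 j,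
    forall_eq_zero_of_value_eq_zero (fun i k => hpos i (1 + k)) (fun k => hsum (1 + k)) h0 j⟩

lemma eq_or_isCarryPair_of_value_eq (hpos : ∀ i k, 0 < w i k)
    (hsum : ∀ k, w 0 k + w 1 k + w 2 k = 1) {γ γ' : ℕ → Fin 3} (h : value w γ = value w γ') :
    γ = γ' ∨ IsCarryPair γ γ' ∨ IsCarryPair γ' γ := by
  by_cases hγ : γ = γ'
  · exact Or.inl hγ
  have hex : ∃ j, γ j ≠ γ' j := Function.ne_iff.1 hγ
  set r := Nat.find hex
  have hagree : ∀ j < r, γ j = γ' j := fun j hj => not_not.1 (Nat.find_min hex hj)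
  have htail :
      value (shift w r) (fun j => γ (r + j)) = value (shift w r) (fun j => γ' (r + j)) := by
    rw [value_eq_partialValue_add γ (summable_term_of_pos hpos hsum γ) r,
      value_eq_partialValue_add γ' (summable_term_of_pos hpos hsum γ') r,
      partialValue_congr hagree, weight_congr hagree] at h
    exact mul_left_cancel₀ (weight_pos hpos γ' r).ne' (add_left_cancel h)
  have hpos' := fun i k => hpos i (r + k)
  have hsum' := fun k => hsum (r + k)
  have hshift : ∀ j, r < j → r + (j - r) = j := fun j hj => by omega
  rcases lt_or_gt_of_ne (Nat.find_spec hex) with hlt | hlt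
  · obtain ⟨hsucc, htl⟩ := carry_of_value_eq_of_head_lt hpos' hsum' htail (by simpa using hlt)
    refine Or.inr (Or.inl ⟨r, hagree, by simpa using hsucc, fun j hj => ?_⟩)
    simpa [hshift j hj] using htl (j - r) (by omega)
  · obtain ⟨hsucc, htl⟩ := carry_of_value_eq_of_head_lt hpos' hsum' htail.symm (by simpa using hlt)
    refine Or.inr (Or.inr ⟨r, fun j hj => (hagree j hj).symm, by simpa using hsucc, fun j hj => ?_⟩)
    simpa [hshift j hj] using htl (j - r) (by omega)

lemma value_mem_cylinder (hpos : ∀ i k, 0 < w i k) (hsum : ∀ k, w 0 k + w 1 k + w 2 k = 1)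
    (γ : ℕ → Fin 3) (n : ℕ) :
    value w γ ∈ Icc (partialValue w γ n) (partialValue w γ n + weight w γ n) := by
  rw [value_eq_partialValue_add γ (summable_term_of_pos hpos hsum γ) n]
  have ht := value_shift_mem_Icc hpos hsum n fun j => γ (n + j)
  have hP := weight_pos hpos γ n
  constructor <;> nlinarith [ht.1, ht.2]

lemma eq_of_mem_Ioo_cylinder (hpos : ∀ i k, 0 < w i k) (hsum : ∀ k, w 0 k + w 1 k + w 2 k = 1)
    {β γ : ℕ → Fin 3} {n : ℕ} (h1 : partialValue w β n < value w γ)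
    (h2 : value w γ < partialValue w β n + weight w β n) : ∀ j < n, γ j = β j := by
  induction n generalizing w β γ with
  | zero => intro j hj; omega
  | succ n ih =>
    have hmaps := (mapsUnit_of_pos hpos hsum).shift 1
    have hs := partialValue_add_weight_mul_mem_Icc hmaps (fun j => β (1 + j)) n 0 (by simp)
    have hsp := partialValue_add_weight_mul_mem_Icc hmaps (fun j => β (1 + j)) n 1 (by simp)
    have ht := value_shift_mem_Icc hpos hsum 1 fun j => γ (1 + j)
    rw [mul_zero, add_zero] at hs
    rw [mul_one] at hsp
    simp only [add_comm n 1, partialValue_add, weight_add, partialValue_one, weight_one,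
      value_eq_offset_add γ (summable_term_of_pos hpos hsum γ)] at h1 h2
    have hhead : γ 0 = β 0 := by
      rcases lt_trichotomy (γ 0) (β 0) with hlt | heq | hgt
      · linarith [offset_add_mul_le hpos hlt 0 ht hs]
      · exact heq
      · linarith [offset_add_mul_le hpos hgt 0 hsp ht]
    rw [hhead] at h1 h2
    have hpos0 := hpos (β 0) 0
    have htail := ih (w := shift w 1) (β := fun j => β (1 + j)) (γ := fun j => γ (1 + j))
      (fun i k => hpos i (1 + k)) (fun k => hsum (1 + k))
      (lt_of_mul_lt_mul_left (by linarith) hpos0.le)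
      (lt_of_mul_lt_mul_left (by linarith) hpos0.le)
    intro j hj
    cases j with
    | zero => exact hhead
    | succ j => simpa [add_comm] using htail j (by omega)

lemma tendsto_weight_of_Icc_subset_range (hpos : ∀ i k, 0 < w i k)
    (hsum : ∀ k, w 0 k + w 1 k + w 2 k = 1) (hsurj : Icc (0 : ℝ) 1 ⊆ range (value w))
    (γ : ℕ → Fin 3) : Tendsto (weight w γ) atTop (𝓝 0) := by
  have hmaps := mapsUnit_of_pos hpos hsum
  have hP := weight_pos hpos γ
  have hstep : ∀ n, offset w (γ n) n + w (γ n) n ≤ 1 := fun n => by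
    simpa using (hmaps (γ n) n 1 (by simp)).2
  have hanti : Antitone (weight w γ) := antitone_nat_of_succ_le fun n => by
    rw [weight_succ]
    exact mul_le_of_le_one_right (hP n).le (by linarith [hstep n, (hmaps.offset_mem (γ n) n).1])
  have hbdd : BddBelow (range (weight w γ)) := ⟨0, forall_mem_range.2 fun n => (hP n).le⟩
  set l := ⨅ n, weight w γ n
  suffices hl : l = 0 by convert tendsto_atTop_ciInf hanti hbdd; exact hl.symm
  by_contra hl
  have hl0 : 0 < l := lt_of_le_of_ne (le_ciInf fun n => (hP n).le) (Ne.symm hl)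
  -- the nested cylinder intervals all contain `[a, a + l]`, so their points have one expansion
  have hmono : Monotone (partialValue w γ) := monotone_nat_of_le_succ fun n => by
    rw [partialValue_succ]
    exact le_add_of_nonneg_right (mul_nonneg (hP n).le (hmaps.offset_mem _ _).1)
  have hanti' : Antitone fun n => partialValue w γ n + weight w γ n - l :=
    antitone_nat_of_succ_le fun n => by
      rw [partialValue_succ, weight_succ]
      nlinarith [hP n, hstep n]
  have hle : partialValue w γ ≤ fun n => partialValue w γ n + weight w γ n - l := fun n => by
    simp only
    linarith [ciInf_le hbdd n]
  have ha := mem_iInter.1 (hmono.ciSup_mem_iInter_Icc_of_antitone hanti' hle)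
  set a := ⨆ n, partialValue w γ n
  have ha0 : 0 ≤ a := by simpa [partialValue] using (ha 0).1
  have ha1 : a ≤ 1 - l := by simpa [partialValue, weight] using (ha 0).2
  have hrep : ∀ y, a < y → y < a + l → value w γ = y := fun y hay hyl => by
    obtain ⟨δ, hδ⟩ := hsurj ⟨by linarith, by linarith⟩
    have hδγ : δ = γ := funext fun j => eq_of_mem_Ioo_cylinder hpos hsum (n := j + 1)
      (by linarith [(ha (j + 1)).1]) (by linarith [(ha (j + 1)).2]) j (lt_add_one j)
    rw [← hδγ, hδ]
  linarith [hrep (a + l / 3) (by linarith) (by linarith),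
    hrep (a + 2 * l / 3) (by linarith) (by linarith)]

def cylinderPoint (β : ℕ → Fin 3) (n : ℕ) (i : Fin 3) : ℕ → Fin 3 :=
  fun j => if j < n then β j else if j = n then i else 0

lemma value_cylinderPoint (β : ℕ → Fin 3) (n : ℕ) (i : Fin 3) :
    value w (cylinderPoint β n i) = partialValue w β n + weight w β n * offset w i n := by
  have hprefix : ∀ j < n, cylinderPoint β n i j = β j := fun j hj => if_pos hj
  rw [value, tsum_eq_sum (s := range (n + 1)) fun k hk => ?_, ← partialValue, partialValue_succ,
    partialValue_congr hprefix, weight_congr hprefix]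
  · simp [cylinderPoint]
  · have hk : n + 1 ≤ k := by simpa using hk
    simp [term, cylinderPoint, show ¬k < n by omega, show k ≠ n by omega, offset_zero]

end Q3

lemma continuousOn_range_of_continuous_comp {K Y Z : Type*} [TopologicalSpace K]
    [CompactSpace K] [TopologicalSpace Y] [T2Space Y] [TopologicalSpace Z] {p : K → Y}
    (hp : Continuous p) {g : Y → Z} (hg : Continuous (g ∘ p)) : ContinuousOn g (range p) := by
  rw [continuousOn_iff_continuous_domRestrict]
  exact (Topology.IsQuotientMap.of_surjective_continuous rangeFactorization_surjective
    hp.rangeFactorization).continuous_iff.2 hg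

lemma not_monotoneOn_and_not_antitoneOn_of_mul_neg {α : Type*} [Preorder α] {f : α → ℝ}
    {s : Set α} {x y z : α} (hx : x ∈ s) (hy : y ∈ s) (hz : z ∈ s) (hxy : x ≤ y) (hyz : y ≤ z)
    (h : (f y - f x) * (f z - f y) < 0) : ¬MonotoneOn f s ∧ ¬AntitoneOn f s := by
  constructor
  · intro hf
    exact h.not_ge (mul_nonneg (sub_nonneg.2 (hf hx hy hxy)) (sub_nonneg.2 (hf hy hz hyz)))
  · intro hf
    exact h.not_ge (mul_nonneg_of_nonpos_of_nonpos (sub_nonpos.2 (hf hx hy hxy))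
      (sub_nonpos.2 (hf hy hz hyz)))

section SignedWeights

variable {ε : ℕ → ℝ}

lemma gq_sum (k : ℕ) : gq ε 0 k + gq ε 1 k + gq ε 2 k = 1 := by
  simp only [gq, Fin.isValue, zero_ne_one, ↓reduceIte, Fin.reduceEq]
  ring

lemma abs_gq_le (hε : ∀ k, 1 / 2 < ε k ∧ ε k ≤ 1) (i : Fin 3) (k : ℕ) : |gq ε i k| ≤ 2 / 3 := by
  obtain ⟨h1, h2⟩ := hε k
  fin_cases i <;> simp [gq] <;> rw [abs_le] <;> constructor <;> linarith

lemma gq_zero_pos (hε : ∀ k, 1 / 2 < ε k ∧ ε k ≤ 1) (k : ℕ) : 0 < gq ε 0 k := by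
  simp only [gq, Fin.isValue, zero_ne_one, ↓reduceIte]
  linarith [(hε k).1]

lemma gq_one_neg (hε : ∀ k, 1 / 2 < ε k ∧ ε k ≤ 1) (k : ℕ) : gq ε 1 k < 0 := by
  simp only [gq, ↓reduceIte]
  linarith [(hε k).1]

lemma gq_ne_zero (hε : ∀ k, 1 / 2 < ε k ∧ ε k ≤ 1) (i : Fin 3) (k : ℕ) : gq ε i k ≠ 0 := by
  have := (hε k).1
  fin_cases i <;> simp [gq] <;> linarith

lemma mapsUnit_gq (hε : ∀ k, 1 / 2 < ε k ∧ ε k ≤ 1) : Q3.MapsUnit (gq ε) := by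
  intro i k t ⟨ht0, ht1⟩
  obtain ⟨h1, h2⟩ := hε k
  fin_cases i <;> simp [Q3.offset, gq] <;> constructor <;> nlinarith

lemma summable_term_gq (hε : ∀ k, 1 / 2 < ε k ∧ ε k ≤ 1) (n : ℕ) (γ : ℕ → Fin 3) :
    Summable (Q3.term (Q3.shift (gq ε) n) γ) :=
  Q3.summable_term_of_abs_le ((mapsUnit_gq hε).shift n) (fun i k => abs_gq_le hε i (n + k))
    (by norm_num) γ

end SignedWeights

section Main

variable {q : Fin 3 → ℕ → ℝ} {ε : ℕ → ℝ} {α : ℝ → ℕ → Fin 3}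

lemma F_eq_of_Xval_eq (hq : ∀ i k, 0 < q i k) (hsum : ∀ k, q 0 k + q 1 k + q 2 k = 1)
    (hε : ∀ k, 1 / 2 < ε k ∧ ε k ≤ 1) {γ γ' : ℕ → Fin 3} (h : Xval q γ = Xval q γ') :
    F ε γ = F ε γ' := by
  have hcarry : ∀ {δ δ'}, Q3.IsCarryPair δ δ' → F ε δ = F ε δ' :=
    Q3.value_eq_of_isCarryPair gq_sum (mapsUnit_gq hε) (abs_gq_le hε) (by norm_num)
  rcases Q3.eq_or_isCarryPair_of_value_eq hq hsum h with rfl | hc | hc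
  · rfl
  · exact hcarry hc
  · exact (hcarry hc).symm

lemma F_comp_eq_of_Xval_eq (hq : ∀ i k, 0 < q i k) (hsum : ∀ k, q 0 k + q 1 k + q 2 k = 1)
    (hε : ∀ k, 1 / 2 < ε k ∧ ε k ≤ 1) (hα : ∀ x ∈ Icc (0 : ℝ) 1, Xval q (α x) = x)
    (γ : ℕ → Fin 3) : F ε (α (Xval q γ)) = F ε γ :=
  F_eq_of_Xval_eq hq hsum hε
    (hα _ (Q3.value_mem_Icc (Q3.mapsUnit_of_pos hq hsum) (Q3.summable_term_of_pos hq hsum γ)))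

lemma continuousOn_F_comp (hq : ∀ i k, 0 < q i k) (hsum : ∀ k, q 0 k + q 1 k + q 2 k = 1)
    (hε : ∀ k, 1 / 2 < ε k ∧ ε k ≤ 1) (hα : ∀ x ∈ Icc (0 : ℝ) 1, Xval q (α x) = x) :
    ContinuousOn (fun x => F ε (α x)) (Icc (0 : ℝ) 1) := by
  have hsurj : Icc (0 : ℝ) 1 ⊆ range (Xval q) := fun x hx => ⟨α x, hα x hx⟩
  have hrange : range (Xval q) = Icc (0 : ℝ) 1 := Subset.antisymm (range_subset_iff.2 fun γ =>
    Q3.value_mem_Icc (Q3.mapsUnit_of_pos hq hsum) (Q3.summable_term_of_pos hq hsum γ)) hsurj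
  have hX : Continuous (Xval q) := Q3.continuous_value (Q3.mapsUnit_of_pos hq hsum)
    (fun n => Q3.summable_term_of_pos (fun i k => hq i (n + k)) (fun k => hsum (n + k)))
    (Q3.tendsto_weight_of_Icc_subset_range hq hsum hsurj)
  have hF : Continuous (F ε) := Q3.continuous_value (mapsUnit_gq hε) (summable_term_gq hε)
    (Q3.tendsto_weight_of_abs_le (abs_gq_le hε) (by norm_num))
  rw [← hrange]
  exact continuousOn_range_of_continuous_comp hX
    (by convert hF using 1; funext γ; exact F_comp_eq_of_Xval_eq hq hsum hε hα γ)

lemma not_monotoneOn_and_not_antitoneOn_F_comp (hq : ∀ i k, 0 < q i k)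
    (hsum : ∀ k, q 0 k + q 1 k + q 2 k = 1)
    (hε : ∀ k, 1 / 2 < ε k ∧ ε k ≤ 1) (hα : ∀ x ∈ Icc (0 : ℝ) 1, Xval q (α x) = x)
    {a b : ℝ} (ha : 0 ≤ a) (hab : a < b) (hb : b ≤ 1) :
    ¬MonotoneOn (fun x => F ε (α x)) (Ioo a b) ∧ ¬AntitoneOn (fun x => F ε (α x)) (Ioo a b) := by
  obtain ⟨x, hxa, hxb⟩ : ∃ x, a < x ∧ x < b := ⟨(a + b) / 2, by linarith, by linarith⟩
  set β := α x
  have hsurj : Icc (0 : ℝ) 1 ⊆ range (Xval q) := fun x hx => ⟨α x, hα x hx⟩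
  obtain ⟨n, hn⟩ := ((Q3.tendsto_weight_of_Icc_subset_range hq hsum hsurj β).eventually
    (gt_mem_nhds (lt_min (sub_pos.2 hxa) (sub_pos.2 hxb)))).exists
  have hcyl : Xval q β ∈ _ := Q3.value_mem_cylinder hq hsum β n
  rw [show Xval q β = x from hα x ⟨by linarith, by linarith⟩] at hcyl
  -- `y i` is the left endpoint of the `i`-th subcylinder of the rank-`n` cylinder of `β` ⊆ `(a, b)`
  set y : Fin 3 → ℝ := fun i => Xval q (Q3.cylinderPoint β n i)
  have hy : ∀ i, y i = Q3.partialValue q β n + Q3.weight q β n * Q3.offset q i n :=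
    fun i => Q3.value_cylinderPoint β n i
  have hmem : ∀ i, y i ∈ Ioo a b := fun i => by
    have hoff := (Q3.mapsUnit_of_pos hq hsum).offset_mem i n
    have hP := Q3.weight_pos hq β n
    rw [hy]
    constructor <;> nlinarith [hoff.1, hoff.2, min_le_left (x - a) (b - x),
      min_le_right (x - a) (b - x), hcyl.1, hcyl.2]
  have hFy : ∀ i, F ε (α (y i)) =
      Q3.partialValue (gq ε) β n + Q3.weight (gq ε) β n * Q3.offset (gq ε) i n := fun i =>
    (F_comp_eq_of_Xval_eq hq hsum hε hα _).trans (Q3.value_cylinderPoint β n i)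
  have hP := Q3.weight_pos hq β n
  have hPF : Q3.weight (gq ε) β n ≠ 0 := prod_ne_zero_iff.2 fun j _ => gq_ne_zero hε _ _
  refine not_monotoneOn_and_not_antitoneOn_of_mul_neg (hmem 0) (hmem 1) (hmem 2) ?_ ?_ ?_
  · rw [hy, hy, Q3.offset_zero, Q3.offset_one]
    nlinarith [hq 0 n]
  · rw [hy, hy, Q3.offset_one, Q3.offset_two]
    nlinarith [hq 1 n]
  · have hincr : (F ε (α (y 1)) - F ε (α (y 0))) * (F ε (α (y 2)) - F ε (α (y 1))) =
        Q3.weight (gq ε) β n ^ 2 * (gq ε 0 n * gq ε 1 n) := by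
      simp only [hFy, Q3.offset_zero, Q3.offset_one, Q3.offset_two]
      ring
    rw [hincr]
    exact mul_neg_of_pos_of_neg (by positivity)
      (mul_neg_of_pos_of_neg (gq_zero_pos hε n) (gq_one_neg hε n))

end Main

theorem stmt12 (q : Fin 3 → ℕ → ℝ) (hq : ∀ i k, 0 < q i k)
    (hsum : ∀ k, q 0 k + q 1 k + q 2 k = 1)
    (ε : ℕ → ℝ) (hε : ∀ k, 1 / 2 < ε k ∧ ε k ≤ 1)
    (α : ℝ → ℕ → Fin 3) (hα : ∀ x ∈ Set.Icc (0 : ℝ) 1, Xval q (α x) = x) :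
    ContinuousOn (fun x => F ε (α x)) (Set.Icc (0 : ℝ) 1) ∧
    ∀ a b : ℝ, 0 ≤ a → a < b → b ≤ 1 →
      ¬ MonotoneOn (fun x => F ε (α x)) (Set.Ioo a b) ∧
      ¬ AntitoneOn (fun x => F ε (α x)) (Set.Ioo a b) :=
  ⟨continuousOn_F_comp hq hsum hε hα,
    fun _ _ ha hab hb => not_monotoneOn_and_not_antitoneOn_F_comp hq hsum hε hα ha hab hb⟩
end

section
/- Suppose ε_k = ε is constant and q_{ik} = q_i is constant in k (Q_3-representation), with g_i ≠ 0 for i = 0,1,2 (i.e., ε ≠ 1/2). Then the graph Γ_f = {(x, f(x)) : x ∈ [0,1]} satisfies Γ_f^i = φ_i(Γ_f) for each i ∈ {0,1,2}, where Γ_f^i = {(x, f(x)) : x ∈ Δ_i} is the part of the graph over the first-level cylinder Δ_i and φ_i is the affine map φ_i(x,y) = (q_i x + β_i, g_i y + δ_i). In particular, the graph is self-affine: Γ_f = φ_0(Γ_f) ∪ φ_1(Γ_f) ∪ φ_2(Γ_f). -/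
open Finset

/-!
The coding map `a ↦ ∑ β_{a_k} ∏_{j<k} q_{a_j}` of the positive system `q` identifies two digit
sequences only when they are the codings `i 2 2 2 …` and `(i+1) 0 0 0 …` of a common endpoint of
adjacent cylinders. The system `g` also satisfies `g_0 + g_1 + g_2 = 1`, so it sends both codings
to the same value as well: `f` does not depend on the coding `α`. Prepending the digit `i` to a
coding of `x` then gives `f (q_i x + β_i) = g_i f x + δ_i`, i.e. `φ_i` maps the graph onto its
part over `Δ_i`.
-/

noncomputable def digitSeries {ι : Type*} (w o : ι → ℝ) (a : ℕ → ι) : ℝ :=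
  ∑' k, o (a k) * ∏ j ∈ range k, w (a j)

section DigitSeries

variable {ι : Type*} {w o : ι → ℝ}

lemma summable_digitSeries [Finite ι] (hw : ∀ i, |w i| < 1) (a : ℕ → ι) :
    Summable fun k => o (a k) * ∏ j ∈ range k, w (a j) := by
  have : Nonempty ι := ⟨a 0⟩
  obtain ⟨iw, hiw⟩ := Finite.exists_max fun i => |w i|
  obtain ⟨io, hio⟩ := Finite.exists_max fun i => |o i|
  refine Summable.of_norm_bounded ((summable_geometric_of_lt_one (abs_nonneg _) (hw iw)).mul_left
    |o io|) fun k => ?_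
  rw [Real.norm_eq_abs, abs_mul, abs_prod]
  refine mul_le_mul (hio _) ?_ (by positivity) (abs_nonneg _)
  calc ∏ j ∈ range k, |w (a j)| ≤ ∏ _j ∈ range k, |w iw| :=
        prod_le_prod (fun _ _ => abs_nonneg _) fun _ _ => hiw _
    _ = |w iw| ^ k := by rw [prod_const, card_range]

lemma digitSeries_eq_add_mul_tail [Finite ι] (hw : ∀ i, |w i| < 1) (a : ℕ → ι) :
    digitSeries w o a = o (a 0) + w (a 0) * digitSeries w o (fun n => a (n + 1)) := by
  rw [digitSeries, (summable_digitSeries hw a).tsum_eq_zero_add, digitSeries, ← tsum_mul_left]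
  congr 1
  · simp
  · exact tsum_congr fun k => by rw [prod_range_succ']; ring

lemma digitSeries_cons [Finite ι] (hw : ∀ i, |w i| < 1) (i : ι) (a : ℕ → ι) :
    digitSeries w o (Stream'.cons i a) = o i + w i * digitSeries w o a :=
  digitSeries_eq_add_mul_tail hw _

lemma digitSeries_const (hw : ∀ i, |w i| < 1) (i : ι) :
    digitSeries w o (fun _ => i) = o i / (1 - w i) := by
  simp only [digitSeries, prod_const, card_range]
  rw [tsum_mul_left, tsum_geometric_of_abs_lt_one (hw i), div_eq_mul_inv]

lemma digitSeries_mem_Icc (hw : ∀ i, 0 ≤ w i) (ho : ∀ i, 0 ≤ o i)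
    (hle : ∀ i, o i + w i ≤ 1) (a : ℕ → ι) : digitSeries w o a ∈ Set.Icc 0 1 := by
  have hterm : ∀ k, 0 ≤ o (a k) * ∏ j ∈ range k, w (a j) :=
    fun k => mul_nonneg (ho _) (prod_nonneg fun _ _ => hw _)
  have hpartial : ∀ n, ∑ k ∈ range n, o (a k) * ∏ j ∈ range k, w (a j)
      + ∏ j ∈ range n, w (a j) ≤ 1 := by
    intro n
    induction n with
    | zero => simp
    | succ n ih =>
      have hprod : 0 ≤ ∏ j ∈ range n, w (a j) := prod_nonneg fun _ _ => hw _
      rw [sum_range_succ, prod_range_succ]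
      nlinarith [hle (a n)]
  refine ⟨tsum_nonneg hterm, Real.tsum_le_of_sum_range_le hterm fun n => ?_⟩
  linarith [hpartial n, prod_nonneg fun j (_ : j ∈ range n) => hw (a j)]

end DigitSeries

def ternaryOffset (w : Fin 3 → ℝ) (i : Fin 3) : ℝ :=
  if i = 0 then 0 else if i = 1 then w 0 else w 0 + w 1

noncomputable def ternaryValue (w : Fin 3 → ℝ) (a : ℕ → Fin 3) : ℝ :=
  digitSeries w (ternaryOffset w) a

section Ternary

variable {w : Fin 3 → ℝ}

@[simp] lemma ternaryOffset_zero : ternaryOffset w 0 = 0 := rfl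
@[simp] lemma ternaryOffset_one : ternaryOffset w 1 = w 0 := rfl
@[simp] lemma ternaryOffset_two : ternaryOffset w 2 = w 0 + w 1 := rfl

lemma ternaryValue_eq_add_mul_tail (hw : ∀ i, |w i| < 1) (a : ℕ → Fin 3) :
    ternaryValue w a = ternaryOffset w (a 0) + w (a 0) * ternaryValue w (fun n => a (n + 1)) :=
  digitSeries_eq_add_mul_tail hw a

lemma ternaryValue_const_zero : ternaryValue w (fun _ => 0) = 0 := by
  simp [ternaryValue, digitSeries]

lemma ternaryValue_const_two (hw : ∀ i, |w i| < 1) (hsum : w 0 + w 1 + w 2 = 1) :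
    ternaryValue w (fun _ => 2) = 1 := by
  have h2 : 1 - w 2 ≠ 0 := by linarith [(abs_lt.1 (hw 2)).2]
  rw [ternaryValue, digitSeries_const hw, div_eq_one_iff_eq h2, ternaryOffset_two]
  linarith

end Ternary

section Positive

variable {w v : Fin 3 → ℝ} (hw : ∀ i, 0 < w i) (hsum : w 0 + w 1 + w 2 = 1)
include hw hsum

lemma abs_lt_one_of_pos_of_sum_eq_one (i : Fin 3) : |w i| < 1 := by
  rw [abs_lt]
  refine ⟨by linarith [hw i], ?_⟩
  have := hw 0; have := hw 1; have := hw 2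
  obtain rfl | rfl | rfl : i = 0 ∨ i = 1 ∨ i = 2 := (by omega) <;> linarith

lemma ternaryValue_mem_Icc (a : ℕ → Fin 3) : ternaryValue w a ∈ Set.Icc 0 1 := by
  have := hw 0; have := hw 1; have := hw 2
  refine digitSeries_mem_Icc (fun i => (hw i).le) (fun i => ?_) (fun i => ?_) a <;>
    obtain rfl | rfl | rfl : i = 0 ∨ i = 1 ∨ i = 2 := (by omega) <;>
    simp only [ternaryOffset_zero, ternaryOffset_one, ternaryOffset_two] <;> linarith

lemma Icc_zero_one_eq_union_Icc_ternaryOffset :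
    Set.Icc 0 1 = Set.Icc (ternaryOffset w 0) (ternaryOffset w 0 + w 0) ∪
      Set.Icc (ternaryOffset w 1) (ternaryOffset w 1 + w 1) ∪
      Set.Icc (ternaryOffset w 2) (ternaryOffset w 2 + w 2) := by
  have := hw 0; have := hw 1; have := hw 2
  change Set.Icc 0 1 = Set.Icc 0 (0 + w 0) ∪ Set.Icc (w 0) (w 0 + w 1) ∪
    Set.Icc (w 0 + w 1) (w 0 + w 1 + w 2)
  rw [zero_add, Set.Icc_union_Icc_eq_Icc, Set.Icc_union_Icc_eq_Icc, hsum] <;> linarith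

lemma eq_const_two_of_ternaryValue_eq_one {a : ℕ → Fin 3} (h : ternaryValue w a = 1) :
    a = fun _ => 2 := by
  have hstep : ∀ b : ℕ → Fin 3, ternaryValue w b = 1 →
      b 0 = 2 ∧ ternaryValue w (fun n => b (n + 1)) = 1 := by
    intro b hb
    rw [ternaryValue_eq_add_mul_tail (abs_lt_one_of_pos_of_sum_eq_one hw hsum)] at hb
    obtain ⟨-, htail⟩ := ternaryValue_mem_Icc hw hsum fun n => b (n + 1)
    have := hw 0; have := hw 1; have := hw 2
    obtain h0 | h0 | h0 : b 0 = 0 ∨ b 0 = 1 ∨ b 0 = 2 := (by omega) <;>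
      simp only [h0, ternaryOffset_zero, ternaryOffset_one, ternaryOffset_two] at hb
    · nlinarith
    · nlinarith
    · exact ⟨h0, by nlinarith⟩
  funext n
  induction n generalizing a with
  | zero => exact (hstep a h).1
  | succ n ih => exact ih (hstep a h).2

lemma eq_const_zero_of_ternaryValue_eq_zero {a : ℕ → Fin 3} (h : ternaryValue w a = 0) :
    a = fun _ => 0 := by
  have hstep : ∀ b : ℕ → Fin 3, ternaryValue w b = 0 →
      b 0 = 0 ∧ ternaryValue w (fun n => b (n + 1)) = 0 := by
    intro b hb
    rw [ternaryValue_eq_add_mul_tail (abs_lt_one_of_pos_of_sum_eq_one hw hsum)] at hb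
    obtain ⟨htail, -⟩ := ternaryValue_mem_Icc hw hsum fun n => b (n + 1)
    have := hw 0; have := hw 1; have := hw 2
    obtain h0 | h0 | h0 : b 0 = 0 ∨ b 0 = 1 ∨ b 0 = 2 := (by omega) <;>
      simp only [h0, ternaryOffset_zero, ternaryOffset_one, ternaryOffset_two] at hb
    · exact ⟨h0, by simpa [(hw 0).ne'] using hb⟩
    · nlinarith
    · nlinarith
  funext n
  induction n generalizing a with
  | zero => exact (hstep a h).1
  | succ n ih => exact ih (hstep a h).2

lemma tails_of_ternaryValue_eq_of_head_lt {a b : ℕ → Fin 3}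
    (h : ternaryValue w a = ternaryValue w b) (hab : a 0 < b 0) :
    (a 0 = 0 ∧ b 0 = 1 ∨ a 0 = 1 ∧ b 0 = 2) ∧
      (fun n => a (n + 1)) = (fun _ => 2) ∧ (fun n => b (n + 1)) = fun _ => 0 := by
  have hw' := abs_lt_one_of_pos_of_sum_eq_one hw hsum
  rw [ternaryValue_eq_add_mul_tail hw' a, ternaryValue_eq_add_mul_tail hw' b] at h
  obtain ⟨hs0, hs1⟩ := ternaryValue_mem_Icc hw hsum fun n => a (n + 1)
  obtain ⟨ht0, ht1⟩ := ternaryValue_mem_Icc hw hsum fun n => b (n + 1)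
  have := hw 0; have := hw 1; have := hw 2
  suffices a 0 = 0 ∧ b 0 = 1 ∨ a 0 = 1 ∧ b 0 = 2 by
    refine ⟨this, eq_const_two_of_ternaryValue_eq_one hw hsum ?_,
      eq_const_zero_of_ternaryValue_eq_zero hw hsum ?_⟩ <;>
    rcases this with ⟨ha, hb⟩ | ⟨ha, hb⟩ <;>
    simp only [ha, hb, ternaryOffset_zero, ternaryOffset_one, ternaryOffset_two] at h <;>
      nlinarith
  obtain ⟨ha, hb⟩ | ⟨ha, hb⟩ | ⟨ha, hb⟩ :
      a 0 = 0 ∧ b 0 = 1 ∨ a 0 = 0 ∧ b 0 = 2 ∨ a 0 = 1 ∧ b 0 = 2 := (by omega)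
  · exact .inl ⟨ha, hb⟩
  · simp only [ha, hb, ternaryOffset_zero, ternaryOffset_two] at h
    nlinarith
  · exact .inr ⟨ha, hb⟩

lemma ternaryValue_eq_of_head_lt (hv : ∀ i, |v i| < 1) (hvsum : v 0 + v 1 + v 2 = 1)
    {a b : ℕ → Fin 3} (h : ternaryValue w a = ternaryValue w b) (hab : a 0 < b 0) :
    ternaryValue v a = ternaryValue v b := by
  obtain ⟨hhead, hta, htb⟩ := tails_of_ternaryValue_eq_of_head_lt hw hsum h hab
  rw [ternaryValue_eq_add_mul_tail hv a, ternaryValue_eq_add_mul_tail hv b, hta, htb,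
    ternaryValue_const_two hv hvsum, ternaryValue_const_zero]
  rcases hhead with ⟨ha, hb⟩ | ⟨ha, hb⟩ <;> simp [ha, hb]

theorem ternaryValue_congr (hv : ∀ i, |v i| < 1) (hvsum : v 0 + v 1 + v 2 = 1)
    {a b : ℕ → Fin 3} (h : ternaryValue w a = ternaryValue w b) :
    ternaryValue v a = ternaryValue v b := by
  have hw' := abs_lt_one_of_pos_of_sum_eq_one hw hsum
  have key : ∀ n (a b : ℕ → Fin 3), ternaryValue w a = ternaryValue w b →
      ternaryValue v a = ternaryValue v b ∨ ∀ j < n, a j = b j := by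
    intro n
    induction n with
    | zero => simp
    | succ n ih =>
      intro a b h
      rcases lt_trichotomy (a 0) (b 0) with hab | hab | hab
      · exact .inl (ternaryValue_eq_of_head_lt hw hsum hv hvsum h hab)
      · rw [ternaryValue_eq_add_mul_tail hw' a, ternaryValue_eq_add_mul_tail hw' b, hab] at h
        have htail := mul_left_cancel₀ (hw (b 0)).ne' (add_left_cancel h)
        refine (ih _ _ htail).imp (fun hv' => ?_) fun hagree j hj => ?_
        · rw [ternaryValue_eq_add_mul_tail hv a, ternaryValue_eq_add_mul_tail hv b, hab, hv']
        · cases j with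
          | zero => exact hab
          | succ j => exact hagree j (by omega)
      · exact .inl (ternaryValue_eq_of_head_lt hw hsum hv hvsum h.symm hab).symm
  by_contra hne
  exact hne (congrArg _ (funext fun n => (key (n + 1) a b h).resolve_left hne n n.lt_succ_self))

end Positive

lemma Set.setOf_exists_mem_eq_pair_eq {α β : Type*} (f : α → β) (s : Set α) :
    {p : α × β | ∃ x ∈ s, p = (x, f x)} = s.graphOn f := by
  ext p
  simp [graphOn, eq_comm]

lemma Set.image_prodMap_graphOn {α β : Type*} {f : α → β} {s : Set α} {u : α → α} {v : β → β}
    (h : ∀ x ∈ s, f (u x) = v (f x)) : Prod.map u v '' s.graphOn f = (u '' s).graphOn f := by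
  simp only [graphOn, image_image]
  exact image_congr fun x hx => by simp [h x hx]

section Coding

variable {w v : Fin 3 → ℝ} (hw : ∀ i, 0 < w i) (hsum : w 0 + w 1 + w 2 = 1)
  (hv : ∀ i, |v i| < 1) (hvsum : v 0 + v 1 + v 2 = 1)
  {α : ℝ → ℕ → Fin 3} (hα : ∀ x ∈ Set.Icc (0 : ℝ) 1, ternaryValue w (α x) = x)
include hw hsum hv hvsum hα

lemma ternaryValue_coding_affine (i : Fin 3) {y : ℝ} (hy : y ∈ Set.Icc (0 : ℝ) 1) :
    ternaryValue v (α (w i * y + ternaryOffset w i))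
      = v i * ternaryValue v (α y) + ternaryOffset v i := by
  have hcons : ∀ u : Fin 3 → ℝ, (∀ i, |u i| < 1) →
      ternaryValue u (Stream'.cons i (α y)) = u i * ternaryValue u (α y) + ternaryOffset u i :=
    fun u hu => (digitSeries_cons hu i (α y)).trans (add_comm _ _)
  have hx : ternaryValue w (Stream'.cons i (α y)) = w i * y + ternaryOffset w i := by
    rw [hcons w (abs_lt_one_of_pos_of_sum_eq_one hw hsum), hα y hy]
  have hx01 : w i * y + ternaryOffset w i ∈ Set.Icc (0 : ℝ) 1 :=
    hx ▸ ternaryValue_mem_Icc hw hsum _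
  rw [ternaryValue_congr hw hsum hv hvsum ((hα _ hx01).trans hx.symm), hcons v hv]

lemma image_graphOn_ternaryValue_coding (i : Fin 3) :
    Prod.map (fun x => w i * x + ternaryOffset w i) (fun y => v i * y + ternaryOffset v i) ''
        (Set.Icc 0 1).graphOn (fun x => ternaryValue v (α x))
      = (Set.Icc (ternaryOffset w i) (ternaryOffset w i + w i)).graphOn
          (fun x => ternaryValue v (α x)) := by
  rw [Set.image_prodMap_graphOn fun y hy => ternaryValue_coding_affine hw hsum hv hvsum hα i hy,
    Set.image_affine_Icc' (hw i), mul_zero, zero_add, mul_one, add_comm (w i)]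

end Coding

theorem stmt15_general (q : Fin 3 → ℝ) (hq : ∀ i, 0 < q i) (hsum : q 0 + q 1 + q 2 = 1)
    (ε : ℝ) (hε : 0 ≤ ε ∧ ε ≤ 1)
    (α : ℝ → ℕ → Fin 3)
    (hα : ∀ x ∈ Set.Icc (0 : ℝ) 1, Xval (fun i _ => q i) (α x) = x) :
    let g : Fin 3 → ℝ := fun i => if i = 1 then (1 - 2 * ε) / 3 else (1 + ε) / 3
    let δ : Fin 3 → ℝ := fun i => if i = 0 then 0 else
      if i = 1 then (1 + ε) / 3 else (1 + ε) / 3 + (1 - 2 * ε) / 3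
    let β : Fin 3 → ℝ := fun i => if i = 0 then 0 else
      if i = 1 then q 0 else q 0 + q 1
    let f : ℝ → ℝ := fun x => F (fun _ => ε) (α x)
    let Γ : Set (ℝ × ℝ) := {p | ∃ x ∈ Set.Icc (0 : ℝ) 1, p = (x, f x)}
    let φ : Fin 3 → ℝ × ℝ → ℝ × ℝ := fun i p => (q i * p.1 + β i, g i * p.2 + δ i)
    (∀ i : Fin 3,
      {p : ℝ × ℝ | ∃ x ∈ Set.Icc (β i) (β i + q i), p = (x, f x)} = φ i '' Γ) ∧
    Γ = (φ 0 '' Γ) ∪ (φ 1 '' Γ) ∪ (φ 2 '' Γ) := by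
  intro g δ β f Γ φ
  obtain ⟨hε0, hε1⟩ := hε
  have hg : ∀ i, |g i| < 1 := by
    intro i
    rw [abs_lt]
    obtain rfl | rfl | rfl : i = 0 ∨ i = 1 ∨ i = 2 := (by omega) <;>
      simp only [g, Fin.reduceEq, ↓reduceIte] <;> constructor <;> linarith
  have hgsum : g 0 + g 1 + g 2 = 1 := by
    show (1 + ε) / 3 + (1 - 2 * ε) / 3 + (1 + ε) / 3 = 1
    ring
  -- `Xval (fun i _ => q i)`, `F (fun _ => ε)`, `β` and `δ` unfold to `ternaryValue q`,
  -- `ternaryValue g`, `ternaryOffset q` and `ternaryOffset g`.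
  have hΓ : Γ = (Set.Icc 0 1).graphOn f := Set.setOf_exists_mem_eq_pair_eq f _
  have hpiece (i : Fin 3) :
      {p | ∃ x ∈ Set.Icc (β i) (β i + q i), p = (x, f x)} = φ i '' Γ := by
    rw [hΓ, Set.setOf_exists_mem_eq_pair_eq]
    exact (image_graphOn_ternaryValue_coding hq hsum hg hgsum hα i).symm
  refine ⟨hpiece, ?_⟩
  rw [← hpiece 0, ← hpiece 1, ← hpiece 2]
  simp only [hΓ, Set.setOf_exists_mem_eq_pair_eq, ← Set.graphOn_union]
  exact congrArg (Set.graphOn f) (Icc_zero_one_eq_union_Icc_ternaryOffset hq hsum)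

theorem stmt15 (q : Fin 3 → ℝ) (hq : ∀ i, 0 < q i) (hsum : q 0 + q 1 + q 2 = 1)
    (ε : ℝ) (hε : 0 ≤ ε ∧ ε ≤ 1) (hεne : ε ≠ 1 / 2)
    (α : ℝ → ℕ → Fin 3)
    (hα : ∀ x ∈ Set.Icc (0 : ℝ) 1, Xval (fun i _ => q i) (α x) = x) :
    let g : Fin 3 → ℝ := fun i => if i = 1 then (1 - 2 * ε) / 3 else (1 + ε) / 3
    let δ : Fin 3 → ℝ := fun i => if i = 0 then 0 else
      if i = 1 then (1 + ε) / 3 else (1 + ε) / 3 + (1 - 2 * ε) / 3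
    let β : Fin 3 → ℝ := fun i => if i = 0 then 0 else
      if i = 1 then q 0 else q 0 + q 1
    let f : ℝ → ℝ := fun x => F (fun _ => ε) (α x)
    let Γ : Set (ℝ × ℝ) := {p | ∃ x ∈ Set.Icc (0 : ℝ) 1, p = (x, f x)}
    let φ : Fin 3 → ℝ × ℝ → ℝ × ℝ := fun i p => (q i * p.1 + β i, g i * p.2 + δ i)
    (∀ i : Fin 3,
      {p : ℝ × ℝ | ∃ x ∈ Set.Icc (β i) (β i + q i), p = (x, f x)} = φ i '' Γ) ∧
    Γ = (φ 0 '' Γ) ∪ (φ 1 '' Γ) ∪ (φ 2 '' Γ) :=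
  stmt15_general q hq hsum ε hε α hα
end
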